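/- arXiv:1603.03109 — 10 statements merged into one kernel-verified Lean document; each statement's English description precedes it below -/
import Mathlib

section
/- Let G be a graph with n vertices and let S(G) be a maximum Sachs subgraph of G (a Sachs subgraph with the maximum number of vertices). Then η_per(G) = n − |V(S(G))|. -/
open Polynomial SimpleGraph

open scoped Classical in
/-- The permanental polynomial `per(xI - A(G))` of a graph. -/
noncomputable def permPoly {V : Type*} [Fintype V] (G : SimpleGraph V) : Polynomial ℤ :=
  Matrix.permanent
    ((Polynomial.X : ℤ[X]) • (1 : Matrix V V ℤ[X]) -
      Matrix.of fun i j => if G.Adj i j then (1 : ℤ[X]) else 0)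

/-- The permanental nullity: multiplicity of 0 as a root of the permanental polynomial. -/
noncomputable def perNullity {V : Type*} [Fintype V] (G : SimpleGraph V) : ℕ :=
  (permPoly G).rootMultiplicity 0

/-- Degree of a vertex in a subgraph. -/
noncomputable def subDeg {V : Type*} {G : SimpleGraph V} (H : G.Subgraph) (v : V) : ℕ :=
  (H.neighborSet v).ncard

/-- A Sachs subgraph: every component is a single edge or a cycle. -/
def IsSachs {V : Type*} {G : SimpleGraph V} (H : G.Subgraph) : Prop :=
  (∀ v ∈ H.verts, subDeg H v = 1 ∨ subDeg H v = 2) ∧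
    ∀ u v, H.Adj u v → subDeg H u = 1 → subDeg H v ≠ 2

/-- Number of cycle components of a Sachs subgraph. -/
noncomputable def cyclesCount {V : Type*} {G : SimpleGraph V} (H : G.Subgraph) : ℕ :=
  H.edgeSet.ncard + Nat.card H.coe.ConnectedComponent - H.verts.ncard

/-- Matching number. -/
noncomputable def matchingNumber {V : Type*} [Fintype V] (G : SimpleGraph V) : ℕ :=
  sSup {n | ∃ M : G.Subgraph, M.IsMatching ∧ M.edgeSet.ncard = n}

/-- A maximum matching. -/
def IsMaximumMatching {V : Type*} {G : SimpleGraph V} (M : G.Subgraph) : Prop :=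
  M.IsMatching ∧ ∀ N : G.Subgraph, N.IsMatching → N.edgeSet.ncard ≤ M.edgeSet.ncard

/-- `D(G)`: vertices missed by at least one maximum matching. -/
def DSet {V : Type*} (G : SimpleGraph V) : Set V :=
  {v | ∃ M : G.Subgraph, IsMaximumMatching M ∧ v ∉ M.verts}

/-- `B(G)`: vertices outside `D(G)` adjacent to `D(G)`. -/
def BSet {V : Type*} (G : SimpleGraph V) : Set V :=
  {v | v ∉ DSet G ∧ ∃ u ∈ DSet G, G.Adj v u}

/-- `C(G)`. -/
def CSet {V : Type*} (G : SimpleGraph V) : Set V :=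
  (DSet G ∪ BSet G)ᶜ

/-- Factor-critical graph. -/
def IsFactorCritical {W : Type*} (H : SimpleGraph W) : Prop :=
  ∀ v : W, ∃ M : (H.induce ({v}ᶜ : Set W)).Subgraph, M.IsPerfectMatching

/-!
Expanding `per(xI - A)` over permutations, `σ` contributes `(-1)^k x^(n-k)` when it moves exactly
`k` vertices, each to a neighbour, and `0` otherwise. All contributions of a given degree have the
same sign, so nothing cancels and the trailing degree is `n - k` for the largest such `k`. The
vertices moved by such a permutation span a Sachs subgraph (its 2-cycles become edges, its longer
cycles become cycles); conversely, adjacent vertices of a Sachs graph have equal degree, so Hall's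
condition holds and the vertices of a Sachs subgraph can be moved along its edges by a permutation
fixing everything else. Hence the largest `k` is the order of a maximum Sachs subgraph.
-/

open Finset

section Hall
variable {α : Type*} [DecidableEq α] {t : α → Finset α}

lemma card_le_card_biUnion_of_card_eq_const (hsymm : ∀ u v, v ∈ t u → u ∈ t v)
    (hcard : ∀ u v, v ∈ t u → #(t u) = #(t v)) {d : ℕ} (hd : 0 < d) {s : Finset α}
    (hs : ∀ v ∈ s, #(t v) = d) : #s ≤ #(s.biUnion t) := by
  refine Nat.le_of_mul_le_mul_right ?_ hd
  refine card_mul_le_card_mul (fun a b => b ∈ t a) (fun a ha => ?_) (fun b hb => ?_)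
  · rw [← hs a ha]
    exact card_le_card fun b hb => (mem_bipartiteAbove _).2 ⟨mem_biUnion.2 ⟨a, ha, hb⟩, hb⟩
  · obtain ⟨a, ha, hab⟩ := mem_biUnion.1 hb
    rw [← hs a ha, hcard a b hab]
    exact card_le_card fun a ha => hsymm _ _ ((mem_bipartiteBelow _).1 ha).2

lemma card_le_card_biUnion_of_symm_of_card_eq (hsymm : ∀ u v, v ∈ t u → u ∈ t v)
    (hcard : ∀ u v, v ∈ t u → #(t u) = #(t v)) (hne : ∀ v, (t v).Nonempty) (s : Finset α) :
    #s ≤ #(s.biUnion t) := by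
  set D := s.image fun v => #(t v)
  set cls : ℕ → Finset α := fun d => {v ∈ s | #(t v) = d}
  have hdisj : (D : Set ℕ).PairwiseDisjoint fun d => (cls d).biUnion t := by
    intro d _ e _ hde
    refine disjoint_left.2 fun b hbd hbe => hde ?_
    obtain ⟨a, ha, hab⟩ := mem_biUnion.1 hbd
    obtain ⟨a', ha', hab'⟩ := mem_biUnion.1 hbe
    rw [← (mem_filter.1 ha).2, ← (mem_filter.1 ha').2, hcard _ _ hab, hcard _ _ hab']
  calc #s = ∑ d ∈ D, #(cls d) := card_eq_sum_card_image _ s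
    _ ≤ ∑ d ∈ D, #((cls d).biUnion t) := by
      refine sum_le_sum fun d hd => card_le_card_biUnion_of_card_eq_const hsymm hcard ?_
        fun v hv => (mem_filter.1 hv).2
      obtain ⟨v, -, rfl⟩ := mem_image.1 hd
      exact card_pos.2 (hne v)
    _ = #(D.biUnion fun d => (cls d).biUnion t) := (card_biUnion hdisj).symm
    _ ≤ #(s.biUnion t) := card_le_card <| biUnion_subset.2 fun d _ =>
      biUnion_subset_biUnion_of_subset_left _ (filter_subset _ _)

end Hall

def MovesAlongEdges {V : Type*} (G : SimpleGraph V) (σ : Equiv.Perm V) : Prop :=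
  ∀ v, σ v ≠ v → G.Adj v (σ v)

namespace MovesAlongEdges

variable {V : Type*} {G : SimpleGraph V} {σ : Equiv.Perm V}

def toSubgraph (hσ : MovesAlongEdges G σ) : G.Subgraph where
  verts := {v | σ v ≠ v}
  Adj := (SimpleGraph.fromRel fun u v => σ u = v).Adj
  adj_sub := by
    rintro u v ⟨huv, rfl | rfl⟩
    · exact hσ u huv.symm
    · exact (hσ v huv).symm
  edge_vert := by
    rintro u v ⟨huv, rfl | rfl⟩
    · exact huv.symm
    · exact fun hu => huv (σ.injective hu)
  symm := (SimpleGraph.fromRel _).symm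

lemma neighborSet_toSubgraph (hσ : MovesAlongEdges G σ) {v : V} (hv : σ v ≠ v) :
    hσ.toSubgraph.neighborSet v = {σ v, σ⁻¹ v} := by
  ext u
  simp only [SimpleGraph.Subgraph.mem_neighborSet, Set.mem_insert_iff, Set.mem_singleton_iff]
  change v ≠ u ∧ (σ v = u ∨ σ u = v) ↔ _
  rw [Equiv.Perm.eq_inv_iff_eq]
  constructor
  · rintro ⟨-, h | h⟩
    exacts [Or.inl h.symm, Or.inr h]
  · rintro (rfl | h)
    · exact ⟨hv.symm, Or.inl rfl⟩
    · exact ⟨fun hvu => hv (hvu ▸ h), Or.inr h⟩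

lemma subDeg_toSubgraph_of_involutive (hσ : MovesAlongEdges G σ) {v : V} (hv : σ v ≠ v)
    (h : σ (σ v) = v) : subDeg hσ.toSubgraph v = 1 := by
  rw [subDeg, neighborSet_toSubgraph hσ hv, (Equiv.Perm.eq_inv_iff_eq).2 h, Set.pair_eq_singleton,
    Set.ncard_singleton]

lemma subDeg_toSubgraph_of_not_involutive (hσ : MovesAlongEdges G σ) {v : V} (hv : σ v ≠ v)
    (h : σ (σ v) ≠ v) : subDeg hσ.toSubgraph v = 2 := by
  rw [subDeg, neighborSet_toSubgraph hσ hv]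
  exact Set.ncard_pair fun h' => h ((Equiv.Perm.eq_inv_iff_eq).1 h')

lemma isSachs_toSubgraph (hσ : MovesAlongEdges G σ) : IsSachs hσ.toSubgraph := by
  refine ⟨fun v hv => ?_, fun u v huv hu => ?_⟩
  · by_cases h : σ (σ v) = v
    exacts [Or.inl (subDeg_toSubgraph_of_involutive hσ hv h),
      Or.inr (subDeg_toSubgraph_of_not_involutive hσ hv h)]
  · have hu' : σ u ≠ u := hσ.toSubgraph.edge_vert huv
    have huu : σ (σ u) = u := by
      by_contra h
      rw [subDeg_toSubgraph_of_not_involutive hσ hu' h] at hu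
      exact absurd hu (by decide)
    have hvv : σ (σ v) = v := by
      obtain ⟨-, rfl | rfl⟩ := huv
      · rw [huu]
      · exact σ.injective huu
    rw [subDeg_toSubgraph_of_involutive hσ (hσ.toSubgraph.edge_vert huv.symm) hvv]
    decide

end MovesAlongEdges

namespace IsSachs

variable {V : Type*} {G : SimpleGraph V} {S : G.Subgraph}

lemma subDeg_eq_of_adj (hS : IsSachs S) {u v : V} (huv : S.Adj u v) : subDeg S u = subDeg S v := by
  rcases hS.1 u (S.edge_vert huv) with hu | hu <;> rcases hS.1 v (S.edge_vert huv.symm) with hv | hv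
  · rw [hu, hv]
  · exact absurd hv (hS.2 u v huv hu)
  · exact absurd hu (hS.2 v u huv.symm hv)
  · rw [hu, hv]

/-- Hall's theorem applied to the neighbourhoods in `S`, with every vertex outside `S` made its
own only neighbour, matches the vertices of `S` to distinct neighbours and fixes all others. -/
lemma exists_perm [Fintype V] (hS : IsSachs S) :
    ∃ σ : Equiv.Perm V, MovesAlongEdges G σ ∧ {v | σ v ≠ v} = S.verts := by
  classical
  let t : V → Finset V := fun v => if v ∈ S.verts then ({u | S.Adj v u} : Finset V) else {v}
  have ht_card : ∀ v ∈ S.verts, #(t v) = subDeg S v := fun v hv => by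
    rw [subDeg, ← Set.ncard_coe_finset]
    simp [t, hv, SimpleGraph.Subgraph.neighborSet]
  have hsymm : ∀ u v, v ∈ t u → u ∈ t v := fun u v huv => by
    by_cases hu : u ∈ S.verts
    · simp only [t, hu, if_true, mem_filter, mem_univ, true_and] at huv
      simpa [t, S.edge_vert huv.symm] using huv.symm
    · simp_all [t]
  have hcard : ∀ u v, v ∈ t u → #(t u) = #(t v) := fun u v huv => by
    by_cases hu : u ∈ S.verts
    · simp only [t, hu, if_true, mem_filter, mem_univ, true_and] at huv
      rw [ht_card u hu, ht_card v (S.edge_vert huv.symm), hS.subDeg_eq_of_adj huv]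
    · simp_all [t]
  have hne : ∀ v, (t v).Nonempty := fun v => by
    by_cases hv : v ∈ S.verts
    · rw [← card_pos, ht_card v hv]
      rcases hS.1 v hv with h | h <;> omega
    · simp [t, hv]
  obtain ⟨f, hf, hft⟩ := (all_card_le_biUnion_card_iff_exists_injective t).1
    (card_le_card_biUnion_of_symm_of_card_eq hsymm hcard hne)
  have hfix : ∀ v ∉ S.verts, f v = v := fun v hv => by simpa [t, hv] using hft v
  have hadj : ∀ v ∈ S.verts, S.Adj v (f v) := fun v hv => by simpa [t, hv] using hft v
  refine ⟨Equiv.ofBijective f (Finite.injective_iff_bijective.1 hf), fun v hv => ?_, ?_⟩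
  · by_cases hvS : v ∈ S.verts
    · exact S.adj_sub (hadj v hvS)
    · exact absurd (hfix v hvS) hv
  · ext v
    refine ⟨fun hv => by_contra fun hvS => hv (hfix v hvS), fun hvS => (hadj v hvS).ne.symm⟩

end IsSachs

section PermPoly

variable {V : Type*} [Fintype V] [DecidableEq V] {G : SimpleGraph V} {σ : Equiv.Perm V}

lemma permPoly_eq_sum_prod [DecidableRel G.Adj] :
    permPoly G = ∑ σ : Equiv.Perm V,
      ∏ v, if σ v = v then (X : ℤ[X]) else if G.Adj v (σ v) then -1 else 0 := by
  unfold permPoly Matrix.permanent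
  congr! 2 with σ - v -
  by_cases h : σ v = v
  · simp [h]
  · simp [h, G.adj_comm, apply_ite]

lemma MovesAlongEdges.prod_eq (hσ : MovesAlongEdges G σ) [DecidableRel G.Adj] :
    (∏ v, if σ v = v then (X : ℤ[X]) else if G.Adj v (σ v) then -1 else 0) =
      C ((-1) ^ #σ.support) * X ^ (Fintype.card V - #σ.support) := by
  rw [← prod_mul_prod_compl σ.support, ← card_compl, map_pow, map_neg, map_one, ← prod_const,
    ← prod_const]
  congr 1
  · refine prod_congr rfl fun v hv => ?_
    rw [Equiv.Perm.mem_support] at hv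
    simp [hv, hσ v hv]
  · refine prod_congr rfl fun v hv => ?_
    simp [Equiv.Perm.notMem_support.1 (mem_compl.1 hv)]

lemma prod_eq_zero_of_not_movesAlongEdges (hσ : ¬MovesAlongEdges G σ) [DecidableRel G.Adj] :
    (∏ v, if σ v = v then (X : ℤ[X]) else if G.Adj v (σ v) then -1 else 0) = 0 := by
  obtain ⟨v, hv, hadj⟩ := not_forall₂.1 hσ
  exact prod_eq_zero (mem_univ v) (by simp [hv, hadj])

open scoped Classical in
lemma coeff_permPoly (m : ℕ) :
    (permPoly G).coeff m = ∑ σ with MovesAlongEdges G σ ∧ Fintype.card V - #σ.support = m,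
      (-1) ^ #σ.support := by
  rw [permPoly_eq_sum_prod, finsetSum_coeff, sum_filter]
  refine sum_congr rfl fun σ _ => ?_
  by_cases hσ : MovesAlongEdges G σ
  · rw [hσ.prod_eq, coeff_C_mul_X_pow]
    simp [hσ, eq_comm]
  · rw [prod_eq_zero_of_not_movesAlongEdges hσ]
    simp [hσ]

lemma natTrailingDegree_permPoly {k : ℕ} (hle : ∀ σ, MovesAlongEdges G σ → #σ.support ≤ k)
    (hex : ∃ σ, MovesAlongEdges G σ ∧ #σ.support = k) :
    (permPoly G).natTrailingDegree = Fintype.card V - k := by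
  classical
  obtain ⟨σ₀, hσ₀, hσ₀k⟩ := hex
  have hkV : k ≤ Fintype.card V := hσ₀k ▸ card_le_univ _
  have hlow : ∀ m < Fintype.card V - k, (permPoly G).coeff m = 0 := fun m hm => by
    rw [coeff_permPoly]
    refine sum_eq_zero fun σ hσ => absurd (mem_filter.1 hσ).2 fun ⟨hσG, hσm⟩ => ?_
    have := hle σ hσG
    omega
  have hlead : (permPoly G).coeff (Fintype.card V - k) ≠ 0 := by
    have hterm : ∀ σ ∈ ({σ | MovesAlongEdges G σ ∧ Fintype.card V - #σ.support =
        Fintype.card V - k} : Finset (Equiv.Perm V)), (-1 : ℤ) ^ #σ.support = (-1) ^ k :=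
      fun σ hσ => by
        obtain ⟨hσG, hσk⟩ := (mem_filter.1 hσ).2
        have := hle σ hσG
        congr 1
        omega
    rw [coeff_permPoly, sum_congr rfl hterm, sum_const, nsmul_eq_mul]
    refine mul_ne_zero (Nat.cast_ne_zero.2 (card_ne_zero.2 ⟨σ₀, ?_⟩)) (pow_ne_zero _ (by norm_num))
    simp [hσ₀, hσ₀k]
  exact le_antisymm (natTrailingDegree_le_of_ne_zero hlead)
    (le_natTrailingDegree (fun h => hlead (by rw [h, coeff_zero])) hlow)

end PermPoly

theorem stmt3 {V : Type*} [Fintype V] (G : SimpleGraph V) (S : G.Subgraph)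
    (hS : IsSachs S) (hmax : ∀ T : G.Subgraph, IsSachs T → T.verts.ncard ≤ S.verts.ncard) :
    perNullity G = Fintype.card V - S.verts.ncard := by
  classical
  have hsupport (σ : Equiv.Perm V) : #σ.support = {v | σ v ≠ v}.ncard := by
    rw [← Equiv.Perm.coe_support_eq_set_support, Set.ncard_coe_finset]
  obtain ⟨σ₀, hσ₀, hσ₀S⟩ := hS.exists_perm
  rw [perNullity, rootMultiplicity_eq_natTrailingDegree']
  refine natTrailingDegree_permPoly (fun σ hσ => ?_) ⟨σ₀, hσ₀, by rw [hsupport, hσ₀S]⟩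
  rw [hsupport]
  exact hmax _ hσ.isSachs_toSubgraph
end

section
/- A graph G on n vertices satisfies η_per(G) = 0 if and only if G has a spanning Sachs subgraph (a Sachs subgraph covering all n vertices). -/
open Polynomial SimpleGraph

/-!
Evaluating at `0`, `π(G, 0) = per(-A) = (-1)^n per(A)`, and `per(A)` counts the permutations `σ`
with `v ~ σ v` for every `v`. Since `π(G) ≠ 0` (modulo 2 a permanent is a determinant, so `π(G)`
reduces to the monic characteristic polynomial of `A`), `η_per(G) = 0` iff such a `σ` exists.
The cycles of such a `σ`, read as undirected graphs (2-cycles as single edges), form a spanning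
Sachs subgraph. Conversely, in a Sachs subgraph adjacent vertices have equal degree (1 on edges,
2 on cycles); in a graph without isolated vertices having this property, Hall's condition holds,
and Hall's theorem returns `σ`.
-/

open Finset

namespace Matrix

variable {n : Type*} [DecidableEq n] [Fintype n]

theorem _root_.RingHom.map_permanent {R S : Type*} [CommSemiring R] [CommSemiring S]
    (f : R →+* S) (M : Matrix n n R) : f M.permanent = (f.mapMatrix M).permanent := by
  simp [permanent, map_sum, map_prod]

theorem permanent_eq_det_of_charP_two {R : Type*} [CommRing R] [CharP R 2] (M : Matrix n n R) :
    M.permanent = M.det := by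
  rw [permanent, det_apply]
  refine Finset.sum_congr rfl fun σ _ => ?_
  rcases Int.units_eq_one_or (Equiv.Perm.sign σ) with h | h <;> simp [h, CharTwo.neg_eq]

end Matrix

theorem SimpleGraph.permanent_adjMatrix {V R : Type*} [Fintype V] [DecidableEq V]
    [CommSemiring R] (G : SimpleGraph V) [DecidableRel G.Adj] :
    (G.adjMatrix R).permanent = #{σ : Equiv.Perm V | ∀ v, G.Adj v (σ v)} := by
  simp [Matrix.permanent, Finset.prod_boole, G.adj_comm]

section PermPoly

variable {V : Type*} [Fintype V] (G : SimpleGraph V)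

open scoped Classical in
theorem permPoly_eq_permanent :
    permPoly G = (Matrix.scalar V (X : ℤ[X]) - G.adjMatrix ℤ[X]).permanent := by
  rw [permPoly, Matrix.smul_one_eq_diagonal]
  rfl

open scoped Classical in
theorem permPoly_eval_zero :
    (permPoly G).eval 0 = (-1) ^ Fintype.card V * #{σ : Equiv.Perm V | ∀ v, G.Adj v (σ v)} := by
  rw [← coe_evalRingHom, permPoly_eq_permanent, RingHom.map_permanent,
    ← G.permanent_adjMatrix, ← Matrix.permanent_smul]
  congr 1
  ext i j
  by_cases h : i = j <;> by_cases hadj : G.Adj i j <;> simp [h, hadj]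

open scoped Classical in
theorem map_permPoly_eq_charpoly_zmod_two :
    (permPoly G).map (Int.castRingHom (ZMod 2)) = (G.adjMatrix (ZMod 2)).charpoly := by
  rw [← coe_mapRingHom, permPoly_eq_permanent, RingHom.map_permanent,
    Matrix.permanent_eq_det_of_charP_two, Matrix.charpoly]
  congr 1
  ext i j : 1
  by_cases h : i = j <;> by_cases hadj : G.Adj i j <;> simp [h, hadj]

theorem permPoly_ne_zero : permPoly G ≠ 0 := by
  classical
  intro h
  apply (G.adjMatrix (ZMod 2)).charpoly_monic.ne_zero
  rw [← map_permPoly_eq_charpoly_zmod_two, h, Polynomial.map_zero]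

end PermPoly

namespace SimpleGraph

variable {V : Type*} [Fintype V] {G : SimpleGraph V} [DecidableRel G.Adj]

theorem card_le_card_biUnion_neighborFinset [DecidableEq V] (hpos : ∀ v, 0 < G.degree v)
    (hdeg : ∀ u v, G.Adj u v → G.degree u = G.degree v) (S : Finset V) :
    #S ≤ #(S.biUnion (G.neighborFinset ·)) := by
  set T := S.biUnion (G.neighborFinset ·)
  have hswap : ∀ v u, v ∈ S ∧ u ∈ G.neighborFinset v ↔ v ∈ {w ∈ S | G.Adj u w} ∧ u ∈ T := by
    intro v u
    simp only [T, mem_filter, mem_biUnion, mem_neighborFinset]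
    exact ⟨fun ⟨hv, hu⟩ => ⟨⟨hv, hu.symm⟩, v, hv, hu⟩, fun ⟨⟨hv, hu⟩, _⟩ => ⟨hv, hu.symm⟩⟩
  -- each `v ∈ S` spreads weight `1` evenly over its neighbours; as degrees agree along edges,
  -- each `u ∈ T` receives at most `deg u · (1 / deg u) = 1`
  suffices (#S : ℚ) ≤ #T by exact_mod_cast this
  calc (#S : ℚ) = ∑ v ∈ S, ∑ _u ∈ G.neighborFinset v, (G.degree v : ℚ)⁻¹ := by
        simp [(hpos _).ne']
    _ = ∑ v ∈ S, ∑ u ∈ G.neighborFinset v, (G.degree u : ℚ)⁻¹ :=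
        sum_congr rfl fun v _ => sum_congr rfl fun u hu => by
          rw [hdeg v u ((G.mem_neighborFinset v u).1 hu)]
    _ = ∑ u ∈ T, ∑ _v ∈ {w ∈ S | G.Adj u w}, (G.degree u : ℚ)⁻¹ := sum_comm' hswap
    _ ≤ ∑ _u ∈ T, 1 := sum_le_sum fun u _ => by
        have hle : #{w ∈ S | G.Adj u w} ≤ G.degree u := by
          rw [← card_neighborFinset_eq_degree]
          exact card_le_card fun w hw => (G.mem_neighborFinset u w).2 (mem_filter.1 hw).2
        rw [sum_const, nsmul_eq_mul, ← div_eq_mul_inv,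
          div_le_one (by exact_mod_cast hpos u)]
        exact_mod_cast hle
    _ = #T := by simp

theorem exists_perm_adj_of_degree_eq (hpos : ∀ v, 0 < G.degree v)
    (hdeg : ∀ u v, G.Adj u v → G.degree u = G.degree v) :
    ∃ σ : Equiv.Perm V, ∀ v, G.Adj v (σ v) := by
  classical
  obtain ⟨f, hf, hadj⟩ := (all_card_le_biUnion_card_iff_exists_injective (G.neighborFinset ·)).1
    (card_le_card_biUnion_neighborFinset hpos hdeg)
  exact ⟨.ofBijective f hf.bijective_of_finite, fun v => (G.mem_neighborFinset v _).1 (hadj v)⟩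

end SimpleGraph

namespace SimpleGraph.Subgraph

variable {V : Type*} {G : SimpleGraph V}

def ofPerm (σ : Equiv.Perm V) (hσ : ∀ v, G.Adj v (σ v)) : G.Subgraph where
  verts := Set.univ
  Adj u v := σ u = v ∨ σ v = u
  adj_sub := by
    rintro u v (rfl | rfl)
    exacts [hσ u, (hσ v).symm]
  edge_vert _ := Set.mem_univ _
  symm := ⟨fun _ _ => Or.symm⟩

variable {σ : Equiv.Perm V} {hσ : ∀ v, G.Adj v (σ v)}

theorem neighborSet_ofPerm (v : V) : (ofPerm σ hσ).neighborSet v = {σ v, σ.symm v} := by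
  ext u
  simp only [mem_neighborSet, ofPerm, Set.mem_insert_iff, Set.mem_singleton_iff,
    Equiv.eq_symm_apply]
  exact or_congr eq_comm Iff.rfl

theorem subDeg_ofPerm_eq_one_iff (v : V) : subDeg (ofPerm σ hσ) v = 1 ↔ σ (σ v) = v := by
  rw [subDeg, neighborSet_ofPerm, ← Equiv.eq_symm_apply]
  by_cases h : σ v = σ.symm v <;> simp [h]

theorem subDeg_ofPerm_eq_two_iff (v : V) : subDeg (ofPerm σ hσ) v = 2 ↔ σ (σ v) ≠ v := by
  rw [subDeg, neighborSet_ofPerm, ne_eq, ← Equiv.eq_symm_apply]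
  by_cases h : σ v = σ.symm v <;> simp [h]

theorem isSachs_ofPerm : IsSachs (ofPerm σ hσ) := by
  refine ⟨fun v _ => ?_, fun u v huv hu hv => ?_⟩
  · rw [subDeg_ofPerm_eq_one_iff, subDeg_ofPerm_eq_two_iff]
    exact em _
  · rw [subDeg_ofPerm_eq_one_iff] at hu
    rw [subDeg_ofPerm_eq_two_iff] at hv
    rcases huv with rfl | rfl
    · exact hv (congrArg σ hu)
    · exact hv (σ.injective hu)

end SimpleGraph.Subgraph

section Sachs

variable {V : Type*} {G : SimpleGraph V} {H : G.Subgraph}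

theorem subDeg_eq_degree (H : G.Subgraph) (v : V) [Fintype (H.neighborSet v)] :
    subDeg H v = H.degree v := by
  rw [subDeg, Subgraph.degree, Set.ncard_eq_toFinset_card', Set.toFinset_card]

theorem IsSachs.subDeg_pos (hS : IsSachs H) {v : V} (hv : v ∈ H.verts) : 0 < subDeg H v := by
  rcases hS.1 v hv with h | h <;> omega

theorem IsSachs.subDeg_eq_of_adj_s4 (hS : IsSachs H) {u v : V} (huv : H.Adj u v) :
    subDeg H u = subDeg H v := by
  have := hS.2 u v huv
  have := hS.2 v u huv.symm
  rcases hS.1 u huv.fst_mem with hu | hu <;> rcases hS.1 v huv.snd_mem with hv | hv <;> omega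

theorem exists_perm_adj_of_isSachs [Fintype V] (hS : IsSachs H) (hspan : H.verts = Set.univ) :
    ∃ σ : Equiv.Perm V, ∀ v, G.Adj v (σ v) := by
  classical
  have hdeg (v : V) : H.spanningCoe.degree v = subDeg H v := by
    rw [Subgraph.degree_spanningCoe, subDeg_eq_degree]
  obtain ⟨σ, hσ⟩ := H.spanningCoe.exists_perm_adj_of_degree_eq
    (fun v => hdeg v ▸ hS.subDeg_pos (hspan ▸ Set.mem_univ v))
    (fun u v huv => by rw [hdeg, hdeg]; exact hS.subDeg_eq_of_adj_s4 huv)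
  exact ⟨σ, fun v => H.adj_sub (hσ v)⟩

theorem exists_perm_adj_iff_exists_isSachs [Fintype V] :
    (∃ σ : Equiv.Perm V, ∀ v, G.Adj v (σ v)) ↔
      ∃ H : G.Subgraph, IsSachs H ∧ H.verts = Set.univ :=
  ⟨fun ⟨σ, hσ⟩ => ⟨.ofPerm σ hσ, Subgraph.isSachs_ofPerm, rfl⟩,
    fun ⟨_, hS, hspan⟩ => exists_perm_adj_of_isSachs hS hspan⟩

end Sachs

theorem perNullity_eq_zero_iff {V : Type*} [Fintype V] (G : SimpleGraph V) :
    perNullity G = 0 ↔ ∃ σ : Equiv.Perm V, ∀ v, G.Adj v (σ v) := by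
  classical
  rw [perNullity, rootMultiplicity_eq_zero_iff, IsRoot.def, permPoly_eval_zero]
  simp [permPoly_ne_zero]

theorem stmt4 {V : Type*} [Fintype V] (G : SimpleGraph V) :
    perNullity G = 0 ↔ ∃ H : G.Subgraph, IsSachs H ∧ H.verts = Set.univ :=
  (perNullity_eq_zero_iff G).trans exists_perm_adj_iff_exists_isSachs
end

section
/- If M and N are perfect matchings of G − v and G − u respectively, where uv is an edge of G, then the symmetric difference M △ N contains exactly one path, this path has even length, joins u and v, and does not contain the edge uv. -/
open Polynomial SimpleGraph

/-!
Every vertex other than `u` and `v` is covered by both matchings, so it has degree `0` or `2` in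
`M △ N`, while `u` (missed by `N`) and `v` (missed by `M`) have degree `1`. Since `uv` lies in
neither matching, adding it to `M △ N` yields a disjoint union of cycles: the cycle through `uv`,
minus `uv`, is a `u`–`v` path, and every other edge lies on one of the remaining cycles. The path
alternates between `M` and `N`, starting with an `M`-edge at `u` and ending with an `N`-edge at
`v`, so its length is even.
-/

namespace SimpleGraph

variable {V : Type*} {G G' : SimpleGraph V}

theorem IsAlternating.adj_getVert_iff_even (halt : G.IsAlternating G') {a b : V}
    {p : G.Walk a b} (hp : p.IsPath) (hfirst : G'.Adj a p.snd) {i : ℕ} (hi : i < p.length) :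
    G'.Adj (p.getVert i) (p.getVert (i + 1)) ↔ Even i := by
  induction i with
  | zero => simpa [p.getVert_zero] using hfirst
  | succ i ih =>
    have hne : p.getVert (i + 1 + 1) ≠ p.getVert i := fun h => by
      have := hp.getVert_injOn (by simp; omega) (by simp; omega) h
      omega
    rw [Nat.even_add_one, ← ih (by omega), G'.adj_comm (p.getVert i)]
    exact halt hne (p.adj_getVert_succ hi) (p.adj_getVert_succ (by omega)).symm

theorem IsCycles.exists_isCycle_mem_edges [Finite V] (hcyc : G.IsCycles) {e : Sym2 V}
    (he : e ∈ G.edgeSet) : ∃ (w : V) (c : G.Walk w w), c.IsCycle ∧ e ∈ c.edges := by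
  induction e using Sym2.ind with
  | _ x y =>
    exact adj_and_reachable_delete_edges_iff_exists_cycle.mp ⟨he, hcyc.reachable_deleteEdges he⟩

theorem IsCycles.sdiff_toSubgraph_spanningCoe [G.LocallyFinite] (hcyc : G.IsCycles) {w : V}
    {c : G.Walk w w} (hc : c.IsCycle) : (G \ c.toSubgraph.spanningCoe).IsCycles := by
  rintro x ⟨y, hy⟩
  simp only [SimpleGraph.mem_neighborSet, sdiff_adj, Subgraph.spanningCoe_adj] at hy
  have hx : x ∉ c.toSubgraph.verts := fun hx =>
    hy.2 ((hc.adj_toSubgraph_iff_of_isCycles hcyc hx y).mpr hy.1)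
  have hnbr : (G \ c.toSubgraph.spanningCoe).neighborSet x = G.neighborSet x := by
    ext z
    simp only [SimpleGraph.mem_neighborSet, sdiff_adj, Subgraph.spanningCoe_adj,
      and_iff_left_iff_imp]
    exact fun _ hxz => hx hxz.fst_mem
  rw [hnbr]
  exact hcyc ⟨y, hy.1⟩

variable {u v : V}

theorem IsCycles.reachable_of_sup_edge [Finite V] (hcyc : (G ⊔ edge u v).IsCycles)
    (hnadj : ¬G.Adj u v) (huv : u ≠ v) : G.Reachable u v := by
  have hdel : (G ⊔ edge u v).deleteEdges {s(u, v)} = G := by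
    rw [deleteEdges, ← edge, sup_sdiff_right_self, sdiff_edge _ hnadj]
  exact hdel ▸ hcyc.reachable_deleteEdges (by simp [edge_adj, huv])

theorem IsCycles.exists_isCycle_mem_edges_of_sup_edge [Finite V]
    (hcyc : (G ⊔ edge u v).IsCycles) (hnadj : ¬G.Adj u v) (huv : u ≠ v) {p : G.Walk u v}
    (hp : p.IsPath) {e : Sym2 V} (he : e ∈ G.edgeSet) (hep : e ∉ p.edges) :
    ∃ (w : V) (c : G.Walk w w), c.IsCycle ∧ e ∈ c.edges := by
  classical
  have := Fintype.ofFinite V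
  -- Removing the cycle `p + vu` from `G ⊔ edge u v` leaves a union of cycles inside `G`.
  let c : (G ⊔ edge u v).Walk v v :=
    .cons (by simp [edge_adj, huv.symm]) (p.mapLe le_sup_left)
  have hvu : s(v, u) ∉ p.edges := fun h => hnadj (p.adj_of_mem_edges h).symm
  have hc : c.IsCycle := (Walk.cons_isCycle_iff _ _).mpr
    ⟨hp.mapLe _, by rwa [Walk.edges_mapLe_eq_edges]⟩
  have hle : (G ⊔ edge u v) \ c.toSubgraph.spanningCoe ≤ G := by
    intro x y hxy
    simp only [sdiff_adj, sup_adj, Subgraph.spanningCoe_adj] at hxy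
    obtain ⟨hG | hedge, hnotc⟩ := hxy
    · exact hG
    · refine absurd ?_ hnotc
      rw [edge_adj] at hedge
      simp only [c, Walk.adj_toSubgraph_iff_mem_edges, Walk.edges_cons, List.mem_cons, Sym2.eq_iff]
      tauto
  have hrest : e ∈ ((G ⊔ edge u v) \ c.toSubgraph.spanningCoe).edgeSet := by
    induction e using Sym2.ind with
    | _ x y =>
    have hne : s(x, y) ≠ s(v, u) := fun h => hnadj (h ▸ he : s(v, u) ∈ G.edgeSet).symm
    simp [c, hne, hep, show G.Adj x y from he]
  obtain ⟨w, c', hc', hec'⟩ :=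
    (hcyc.sdiff_toSubgraph_spanningCoe hc).exists_isCycle_mem_edges hrest
  exact ⟨w, c'.mapLe hle, hc'.mapLe hle, by rwa [Walk.edges_mapLe_eq_edges]⟩

namespace Subgraph

variable {M N : G.Subgraph} {a b : V}

theorem fromEdgeSet_symmDiff_adj :
    (fromEdgeSet (symmDiff M.edgeSet N.edgeSet)).Adj a b ↔ (M.Adj a b ↔ ¬N.Adj a b) := by
  rw [fromEdgeSet_adj, Set.mem_symmDiff, Subgraph.mem_edgeSet, Subgraph.mem_edgeSet]
  have hM : M.Adj a b → a ≠ b := Adj.ne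
  have hN : N.Adj a b → a ≠ b := Adj.ne
  tauto

theorem fromEdgeSet_symmDiff_adj_of_notMem_right (ha : a ∉ N.verts) :
    (fromEdgeSet (symmDiff M.edgeSet N.edgeSet)).Adj a b ↔ M.Adj a b := by
  rw [fromEdgeSet_symmDiff_adj]
  have : ¬N.Adj a b := fun h => ha h.fst_mem
  tauto

theorem IsMatching.isAlternating_fromEdgeSet_symmDiff (hM : M.IsMatching) (hN : N.IsMatching) :
    (fromEdgeSet (symmDiff M.edgeSet N.edgeSet)).IsAlternating M.spanningCoe := by
  intro x w w' hww' hw hw'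
  rw [fromEdgeSet_symmDiff_adj] at hw hw'
  simp only [spanningCoe_adj]
  have hMne : ¬(M.Adj x w ∧ M.Adj x w') := fun h => hww' (hM.eq_of_adj_left h.1 h.2)
  have hNne : ¬(N.Adj x w ∧ N.Adj x w') := fun h => hww' (hN.eq_of_adj_left h.1 h.2)
  tauto

variable {u v : V}

theorem IsMatching.ncard_neighborSet_fromEdgeSet_symmDiff_sup_edge (hM : M.IsMatching)
    (hu : u ∈ M.verts) (huN : u ∉ N.verts) (hvM : v ∉ M.verts) :
    ((fromEdgeSet (symmDiff M.edgeSet N.edgeSet) ⊔ edge u v).neighborSet u).ncard = 2 := by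
  obtain ⟨m, hm, -⟩ := hM hu
  have hmv : m ≠ v := fun h => hvM (h ▸ hm.snd_mem)
  have huv : u ≠ v := fun h => hvM (h ▸ hu)
  have hadj (x : V) : M.Adj u x ↔ x = m := ⟨(hM.eq_of_adj_left · hm), fun h => h ▸ hm⟩
  have hnbr : (fromEdgeSet (symmDiff M.edgeSet N.edgeSet) ⊔ edge u v).neighborSet u = {m, v} := by
    ext x
    simp only [SimpleGraph.mem_neighborSet, SimpleGraph.sup_adj, edge_adj,
      fromEdgeSet_symmDiff_adj_of_notMem_right huN, hadj, Set.mem_insert_iff,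
      Set.mem_singleton_iff]
    grind
  rw [hnbr, Set.ncard_pair hmv]

theorem IsMatching.ncard_neighborSet_fromEdgeSet_symmDiff (hM : M.IsMatching)
    (hN : N.IsMatching) (haM : a ∈ M.verts) (haN : a ∈ N.verts)
    (hne : ((fromEdgeSet (symmDiff M.edgeSet N.edgeSet)).neighborSet a).Nonempty) :
    ((fromEdgeSet (symmDiff M.edgeSet N.edgeSet)).neighborSet a).ncard = 2 := by
  obtain ⟨m, hm, -⟩ := hM haM
  obtain ⟨n, hn, -⟩ := hN haN
  have hadj (x : V) :
      (fromEdgeSet (symmDiff M.edgeSet N.edgeSet)).Adj a x ↔ (x = m ↔ x ≠ n) := by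
    rw [fromEdgeSet_symmDiff_adj,
      show M.Adj a x ↔ x = m from ⟨(hM.eq_of_adj_left · hm), fun h => h ▸ hm⟩,
      show N.Adj a x ↔ x = n from ⟨(hN.eq_of_adj_left · hn), fun h => h ▸ hn⟩]
  obtain ⟨x, hx⟩ := hne
  have hmn : m ≠ n := fun h => by grind [(hadj x).mp hx]
  have hnbr : (fromEdgeSet (symmDiff M.edgeSet N.edgeSet)).neighborSet a = {m, n} := by
    ext x
    simp only [SimpleGraph.mem_neighborSet, hadj, Set.mem_insert_iff, Set.mem_singleton_iff]
    grind
  rw [hnbr, Set.ncard_pair hmn]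

theorem IsMatching.isCycles_fromEdgeSet_symmDiff_sup_edge (hM : M.IsMatching)
    (hN : N.IsMatching) (hMv : M.verts = {v}ᶜ) (hNu : N.verts = {u}ᶜ) (huv : u ≠ v) :
    (fromEdgeSet (symmDiff M.edgeSet N.edgeSet) ⊔ edge u v).IsCycles := by
  intro w hw
  by_cases hwu : w = u
  · subst hwu
    exact hM.ncard_neighborSet_fromEdgeSet_symmDiff_sup_edge (by simp [hMv, huv])
      (by simp [hNu]) (by simp [hMv])
  by_cases hwv : w = v
  · subst hwv
    rw [symmDiff_comm, edge_comm]
    exact hN.ncard_neighborSet_fromEdgeSet_symmDiff_sup_edge (by simp [hNu, huv.symm])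
      (by simp [hMv]) (by simp [hNu])
  have hnbr : (fromEdgeSet (symmDiff M.edgeSet N.edgeSet) ⊔ edge u v).neighborSet w =
      (fromEdgeSet (symmDiff M.edgeSet N.edgeSet)).neighborSet w := by
    ext x
    simp [edge_adj, hwu, hwv]
  rw [hnbr] at hw ⊢
  exact hM.ncard_neighborSet_fromEdgeSet_symmDiff hN (by simp [hMv, hwv]) (by simp [hNu, hwu])
    hw

theorem IsMatching.even_length_of_isPath (hM : M.IsMatching) (hN : N.IsMatching)
    (huN : u ∉ N.verts) (hvM : v ∉ M.verts) (huv : u ≠ v)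
    {p : (fromEdgeSet (symmDiff M.edgeSet N.edgeSet)).Walk u v} (hp : p.IsPath) :
    Even p.length := by
  have hlen : 0 < p.length := (Walk.not_nil_iff_lt_length).mp (Walk.not_nil_of_ne huv)
  have hfirst : M.spanningCoe.Adj u p.snd :=
    (fromEdgeSet_symmDiff_adj_of_notMem_right huN).mp (p.adj_snd (Walk.not_nil_of_ne huv))
  have hlast := (hM.isAlternating_fromEdgeSet_symmDiff hN).adj_getVert_iff_even hp hfirst
    (i := p.length - 1) (by omega)
  rw [Nat.sub_add_cancel hlen, p.getVert_length, spanningCoe_adj] at hlast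
  rw [← Nat.sub_add_cancel hlen, Nat.even_add_one, ← hlast]
  exact fun h => hvM h.snd_mem

end Subgraph

end SimpleGraph

theorem stmt5 {V : Type*} [Fintype V] {G : SimpleGraph V} {u v : V} (huv : G.Adj u v)
    (M N : G.Subgraph) (hM : M.IsMatching) (hMv : M.verts = ({v}ᶜ : Set V))
    (hN : N.IsMatching) (hNu : N.verts = ({u}ᶜ : Set V)) :
    ∃ p : (SimpleGraph.fromEdgeSet (symmDiff M.edgeSet N.edgeSet)).Walk u v,
      p.IsPath ∧ Even p.length ∧ s(u, v) ∉ p.edges ∧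
        ∀ e ∈ (SimpleGraph.fromEdgeSet (symmDiff M.edgeSet N.edgeSet)).edgeSet,
          e ∉ p.edges →
            ∃ (w : V) (c : (SimpleGraph.fromEdgeSet (symmDiff M.edgeSet N.edgeSet)).Walk w w),
              c.IsCycle ∧ e ∈ c.edges := by
  classical
  have huN : u ∉ N.verts := by simp [hNu]
  have hvM : v ∉ M.verts := by simp [hMv]
  have hnadj : ¬(fromEdgeSet (symmDiff M.edgeSet N.edgeSet)).Adj u v := fun h =>
    hvM ((Subgraph.fromEdgeSet_symmDiff_adj_of_notMem_right huN).mp h).snd_mem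
  have hcyc := hM.isCycles_fromEdgeSet_symmDiff_sup_edge hN hMv hNu huv.ne
  obtain ⟨p, hp⟩ := (hcyc.reachable_of_sup_edge hnadj huv.ne).some.toPath
  exact ⟨p, hp, hM.even_length_of_isPath hN huN hvM huv.ne hp,
    fun h => hnadj (p.adj_of_mem_edges h),
    fun e he hep => hcyc.exists_isCycle_mem_edges_of_sup_edge hnadj huv.ne hp he hep⟩
end

section
/- If G is a factor-critical graph with n ≥ 3 vertices, then G has a spanning Sachs subgraph consisting of one odd cycle together with a set of pairwise disjoint edges; consequently η_per(G) = 0. -/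
open Polynomial SimpleGraph

/-!
Take adjacent vertices `u`, `v` and matchings `Mu`, `Mv` covering all vertices but `u`,
resp. `v`. In `Mu ∆ Mv` together with the edge `uv` every vertex has degree 0 or 2, so the
component `K` of `u` is an alternating cycle through `uv`. Away from `v` the set `K` is closed
under `Mv`, so `Mv` matches both `K \ {v}` (hence `|K|` is odd) and the complement of `K`.
Rotating along the cycle and swapping along the matching gives a permutation `σ` with `x ~ σ x`
for all `x`, i.e. a nonzero term of `per A`, and `per (xI - A)` evaluated at `0` is `± per A`.
-/

theorem Matrix.permanent_pos_of_nonneg {n R : Type*} [DecidableEq n] [Fintype n] [CommSemiring R]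
    [PartialOrder R] [IsStrictOrderedRing R] {A : Matrix n n R} (hA : ∀ i j, 0 ≤ A i j)
    (σ : Equiv.Perm n) (hσ : ∀ i, 0 < A (σ i) i) : 0 < A.permanent :=
  Finset.sum_pos' (fun _ _ => Finset.prod_nonneg fun _ _ => hA _ _)
    ⟨σ, Finset.mem_univ _, Finset.prod_pos fun i _ => hσ i⟩

open scoped Classical in
theorem permPoly_eval_zero_s7 {V : Type*} [Fintype V] (G : SimpleGraph V) :
    (permPoly G).eval 0 = (-1) ^ Fintype.card V * (G.adjMatrix ℤ).permanent := by
  rw [← Matrix.permanent_smul, permPoly, Matrix.permanent, Matrix.permanent, ← coe_evalRingHom,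
    map_sum]
  refine Finset.sum_congr rfl fun σ _ => ?_
  rw [map_prod]
  refine Finset.prod_congr rfl fun i _ => ?_
  by_cases h : σ i = i <;> by_cases G.Adj (σ i) i <;> simp [*]

theorem perNullity_eq_zero_of_exists_perm {V : Type*} [Fintype V] {G : SimpleGraph V}
    {σ : Equiv.Perm V} (hσ : ∀ x, G.Adj x (σ x)) : perNullity G = 0 := by
  classical
  refine rootMultiplicity_eq_zero fun h => ?_
  rw [IsRoot, permPoly_eval_zero_s7] at h
  have := (G.adjMatrix ℤ).permanent_pos_of_nonneg
    (fun i j => by by_cases G.Adj i j <;> simp [*]) σ (fun i => by simp [(hσ i).symm])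
  exact mul_ne_zero (pow_ne_zero _ (by norm_num)) this.ne' h

namespace SimpleGraph

open scoped symmDiff

variable {V : Type*} {G : SimpleGraph V}

namespace Subgraph.IsMatching

variable {M : G.Subgraph}

theorem adj_iff_eq (hM : M.IsMatching) {x a y : V} (ha : M.Adj x a) : M.Adj x y ↔ y = a :=
  ⟨fun h => hM.eq_of_adj_left h ha, fun h => h ▸ ha⟩

theorem even_ncard [Finite V] (hM : M.IsMatching) : Even M.verts.ncard := by
  have := Fintype.ofFinite V
  classical
  simpa [Set.ncard_eq_toFinset_card'] using hM.even_card

theorem induce_of_forall_adj (hM : M.IsMatching) {s : Set V} (hs : s ⊆ M.verts)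
    (hclosed : ∀ x ∈ s, ∀ y, M.Adj x y → y ∈ s) : (M.induce s).IsMatching := by
  intro x hx
  obtain ⟨y, hxy, hy⟩ := hM (hs hx)
  exact ⟨y, ⟨hx, hclosed x hx y hxy, hxy⟩, fun z hz => hy z hz.2.2⟩

theorem exists_perm (hM : M.IsMatching) :
    ∃ τ : Equiv.Perm V, (∀ x ∈ M.verts, M.Adj x (τ x)) ∧ ∀ x ∉ M.verts, τ x = x := by
  classical
  let f : V → V := fun x => if hx : x ∈ M.verts then (hM hx).choose else x
  have hf : ∀ x ∈ M.verts, M.Adj x (f x) := fun x hx => by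
    simpa only [f, dif_pos hx] using (hM hx).choose_spec.1
  have hinv : Function.Involutive f := fun x => by
    by_cases hx : x ∈ M.verts
    · exact hM.eq_of_adj_left (hf _ (M.edge_vert (hf x hx).symm)) (hf x hx).symm
    · simp only [f, dif_neg hx]
  exact ⟨hinv.toPerm, hf, fun x hx => dif_neg hx⟩

end Subgraph.IsMatching

theorem Walk.getVert_finRotate {u : V} (p : G.Walk u u) :
    ∀ {m : ℕ} (i : Fin m), m = p.length → p.getVert (finRotate m i) = p.getVert (i + 1)
  | 0, i, _ => i.elim0
  | n + 1, i, hn => by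
    rw [coe_finRotate]
    split_ifs with hi
    · simp [hi, hn]
    · rfl

theorem Walk.IsCycle.exists_perm {u : V} {p : G.Walk u u} (hp : p.IsCycle) :
    ∃ τ : Equiv.Perm V,
      (∀ x ∈ p.support, G.Adj x (τ x)) ∧ ∀ x ∉ p.support, τ x = x := by
  classical
  let f : Fin p.length ↪ V := ⟨fun i => p.getVert i, fun i j h => Fin.ext <|
    hp.getVert_injOn' (by simp; omega) (by simp; omega) h⟩
  have hrange : Set.range f = {x | x ∈ p.support} := by
    ext x
    simp only [Set.mem_range, Set.mem_ofPred_eq, Walk.mem_support_iff_exists_getVert]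
    refine ⟨fun ⟨i, hi⟩ => ⟨i, hi, i.isLt.le⟩, fun ⟨i, hi, hil⟩ => ?_⟩
    rcases hil.lt_or_eq with hil | rfl
    · exact ⟨⟨i, hil⟩, hi⟩
    · refine ⟨⟨0, hp.three_le_length.trans_lt' (by omega)⟩, ?_⟩
      change p.getVert 0 = x
      simpa using hi
  refine ⟨(finRotate _).viaFintypeEmbedding f, fun x hx => ?_, fun x hx => ?_⟩
  · obtain ⟨i, rfl⟩ : x ∈ Set.range f := hrange ▸ hx
    rw [Equiv.Perm.viaFintypeEmbedding_apply_image]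
    change G.Adj (p.getVert i) (p.getVert (finRotate _ i))
    rw [p.getVert_finRotate i rfl]
    exact p.adj_getVert_succ i.isLt
  · exact Equiv.Perm.viaFintypeEmbedding_apply_notMem_range _ _ (hrange ▸ hx)

theorem Walk.IsCycle.ncard_support {u : V} {p : G.Walk u u} (hp : p.IsCycle) :
    {w | w ∈ p.support}.ncard = p.length := by
  classical
  have hsupp : {w | w ∈ p.support} = {w | w ∈ p.support.tail} := by
    ext w
    rw [Set.mem_ofPred_eq, Set.mem_ofPred_eq, ← p.cons_tail_support, List.tail_cons,
      List.mem_cons]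
    refine ⟨?_, Or.inr⟩
    rintro (rfl | h)
    · exact p.end_mem_tail_support hp.not_nil
    · exact h
  rw [hsupp, ← List.coe_toFinset, Set.ncard_coe_finset,
    List.toFinset_card_of_nodup hp.support_nodup, List.length_tail, p.length_support,
    Nat.add_sub_cancel]

theorem exists_perm_adj_of_isCycle_of_isMatching {u : V} {c : G.Walk u u} {M : G.Subgraph}
    (hc : c.IsCycle) (hM : M.IsMatching) (hdisj : Disjoint M.verts {w | w ∈ c.support})
    (hcover : M.verts ∪ {w | w ∈ c.support} = Set.univ) :
    ∃ σ : Equiv.Perm V, ∀ x, G.Adj x (σ x) := by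
  obtain ⟨τc, hτc, hτc'⟩ := hc.exists_perm
  obtain ⟨τM, hτM, hτM'⟩ := hM.exists_perm
  refine ⟨τc * τM, fun x => ?_⟩
  by_cases hx : x ∈ M.verts
  · have hy : τM x ∉ c.support := Set.disjoint_left.mp hdisj (M.edge_vert (hτM x hx).symm)
    simpa [hτc' _ hy] using (hτM x hx).adj_sub
  · have hx' : x ∈ c.support := by
      simpa [hx] using hcover.ge (Set.mem_univ x)
    simpa [hτM' x hx] using hτc x hx'

theorem symmDiff_spanningCoe_adj_iff {M M' : G.Subgraph} (hM : M.IsMatching)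
    (hM' : M'.IsMatching) {x a b y : V} (ha : M.Adj x a) (hb : M'.Adj x b) :
    (M.spanningCoe ∆ M'.spanningCoe).Adj x y ↔ a ≠ b ∧ (y = a ∨ y = b) := by
  simp only [symmDiff_def, sup_adj, sdiff_adj, Subgraph.spanningCoe_adj, hM.adj_iff_eq ha,
    hM'.adj_iff_eq hb]
  grind

theorem symmDiff_spanningCoe_adj_iff_of_notMem {M M' : G.Subgraph} (hM' : M'.IsMatching)
    {x b y : V} (hx : x ∉ M.verts) (hb : M'.Adj x b) :
    (M.spanningCoe ∆ M'.spanningCoe).Adj x y ↔ y = b := by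
  have : ¬ M.Adj x y := fun h => hx (M.edge_vert h)
  simp only [symmDiff_def, sup_adj, sdiff_adj, Subgraph.spanningCoe_adj, hM'.adj_iff_eq hb]
  tauto

section NearPerfectMatchings

variable {Mu Mv : G.Subgraph} {u v : V}

theorem isCycles_symmDiff_sup_edge (hMu : Mu.IsMatching) (hMv : Mv.IsMatching)
    (hu : Mu.verts = {u}ᶜ) (hv : Mv.verts = {v}ᶜ) (huv : u ≠ v) :
    (Mu.spanningCoe ∆ Mv.spanningCoe ⊔ edge u v).IsCycles := by
  rintro x ⟨y₀, hy₀⟩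
  rw [Set.ncard_eq_two]
  by_cases hxu : x = u
  · subst hxu
    obtain ⟨b, hb, -⟩ := hMv (hv ▸ huv : x ∈ Mv.verts)
    have hbv : b ≠ v := by simpa [hv] using Mv.edge_vert hb.symm
    have hxMu : x ∉ Mu.verts := by simp [hu]
    refine ⟨v, b, hbv.symm, Set.ext fun y => ?_⟩
    simp only [mem_neighborSet, sup_adj, edge_adj,
      symmDiff_spanningCoe_adj_iff_of_notMem hMv hxMu hb]
    grind
  by_cases hxv : x = v
  · subst hxv
    obtain ⟨a, ha, -⟩ := hMu (hu ▸ Ne.symm huv : x ∈ Mu.verts)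
    have hau : a ≠ u := by simpa [hu] using Mu.edge_vert ha.symm
    have hxMv : x ∉ Mv.verts := by simp [hv]
    refine ⟨u, a, hau.symm, Set.ext fun y => ?_⟩
    simp only [mem_neighborSet, sup_adj, edge_adj, symmDiff_comm Mu.spanningCoe,
      symmDiff_spanningCoe_adj_iff_of_notMem hMu hxMv ha]
    grind
  obtain ⟨a, ha, -⟩ := hMu (hu ▸ hxu : x ∈ Mu.verts)
  obtain ⟨b, hb, -⟩ := hMv (hv ▸ hxv : x ∈ Mv.verts)
  have hadj (y : V) : (Mu.spanningCoe ∆ Mv.spanningCoe ⊔ edge u v).Adj x y ↔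
      a ≠ b ∧ (y = a ∨ y = b) := by
    simp only [sup_adj, edge_adj, symmDiff_spanningCoe_adj_iff hMu hMv ha hb]
    grind
  have hab := ((hadj y₀).mp hy₀).1
  refine ⟨a, b, hab, Set.ext fun y => ?_⟩
  rw [mem_neighborSet, hadj]
  simp [hab]

theorem reachable_of_reachable_of_adj_symmDiff_sup_edge (hMu : Mu.IsMatching)
    (hMv : Mv.IsMatching) (hu : Mu.verts = {u}ᶜ) {y z : V}
    (hy : (Mu.spanningCoe ∆ Mv.spanningCoe ⊔ edge u v).Reachable u y) (hyv : y ≠ v)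
    (hyz : Mv.Adj y z) : (Mu.spanningCoe ∆ Mv.spanningCoe ⊔ edge u v).Reachable u z := by
  set H := Mu.spanningCoe ∆ Mv.spanningCoe ⊔ edge u v
  by_cases hHyz : H.Adj y z
  · exact hy.trans hHyz.reachable
  exfalso
  by_cases hyu : y = u
  · have hyMu : y ∉ Mu.verts := by simp [hu, hyu]
    exact hHyz (Or.inl ((symmDiff_spanningCoe_adj_iff_of_notMem hMv hyMu hyz).mpr rfl))
  -- `y` is matched to `z` by both matchings, so it is isolated in `H`, yet reachable from `u`.
  obtain ⟨a, ha, -⟩ := hMu (hu ▸ hyu : y ∈ Mu.verts)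
  have hisolated : ∀ w, ¬ H.Adj y w := by
    simp only [H, sup_adj, edge_adj, symmDiff_spanningCoe_adj_iff hMu hMv ha hyz] at hHyz ⊢
    grind
  obtain ⟨p⟩ := hy.symm
  cases p with
  | nil => exact hyu rfl
  | cons h _ => exact hisolated _ h

theorem exists_odd_cycle_isMatching_of_isMatching_compl [Finite V] (hMu : Mu.IsMatching)
    (hMv : Mv.IsMatching) (hu : Mu.verts = {u}ᶜ) (hv : Mv.verts = {v}ᶜ) (huv : G.Adj u v) :
    ∃ (c : G.Walk u u) (M : G.Subgraph), c.IsCycle ∧ Odd c.length ∧ M.IsMatching ∧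
      Disjoint M.verts {w | w ∈ c.support} ∧ M.verts ∪ {w | w ∈ c.support} = Set.univ := by
  set H := Mu.spanningCoe ∆ Mv.spanningCoe ⊔ edge u v
  have hHG : H ≤ G := sup_le (symmDiff_le_sup.trans (sup_le Mu.spanningCoe_le Mv.spanningCoe_le))
    ((edge_le_iff G).mpr (Or.inr huv))
  have hHuv : H.Adj u v := Or.inr ((edge_adj u v u v).mpr ⟨Or.inl ⟨rfl, rfl⟩, huv.ne⟩)
  set K := (H.connectedComponentMk u).supp
  obtain ⟨c, hc, hcK⟩ := (isCycles_symmDiff_sup_edge hMu hMv hu hv huv.ne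
    ).exists_cycle_toSubgraph_verts_eq_connectedComponentSupp rfl ⟨v, hHuv⟩
  have hsupp : {w | w ∈ (c.mapLe hHG).support} = K := by
    rw [Walk.support_mapLe_eq_support, ← Walk.verts_toSubgraph, hcK]
  have hmemK (y : V) : y ∈ K ↔ H.Reachable u y := by
    rw [ConnectedComponent.mem_supp_iff, ConnectedComponent.eq, reachable_comm]
  have hvK : v ∈ K := (hmemK v).mpr hHuv.reachable
  have hclosed (y : V) (hy : y ∈ K) (hyv : y ≠ v) (z : V) (hyz : Mv.Adj y z) : z ∈ K :=
    (hmemK z).mpr <| reachable_of_reachable_of_adj_symmDiff_sup_edge hMu hMv hu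
      ((hmemK y).mp hy) hyv hyz
  have hcompl : (Mv.induce Kᶜ).IsMatching :=
    hMv.induce_of_forall_adj (fun x hx => hv ▸ fun hxv => hx (hxv ▸ hvK))
      fun x hx z hxz hzK =>
        hx (hclosed z hzK (by simpa [hv] using Mv.edge_vert hxz.symm) x hxz.symm)
  have hdiff : (Mv.induce (K \ {v})).IsMatching :=
    hMv.induce_of_forall_adj (fun x hx => hv ▸ hx.2)
      fun x hx z hxz => ⟨hclosed x hx.1 hx.2 z hxz, by simpa [hv] using Mv.edge_vert hxz.symm⟩
  refine ⟨c.mapLe hHG, Mv.induce Kᶜ, hc.mapLe hHG, ?_, hcompl, ?_, ?_⟩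
  · rw [← (hc.mapLe hHG).ncard_support, hsupp, ← Set.ncard_sdiff_singleton_add_one hvK]
    exact hdiff.even_ncard.add_one
  · rw [hsupp]
    exact disjoint_compl_left
  · rw [hsupp]
    exact Set.compl_union_self K

end NearPerfectMatchings

end SimpleGraph

theorem IsFactorCritical.exists_isMatching_verts_eq_compl {V : Type*} {G : SimpleGraph V}
    (hfc : IsFactorCritical G) (v : V) :
    ∃ M : G.Subgraph, M.IsMatching ∧ M.verts = {v}ᶜ := by
  obtain ⟨M, hM, hMspan⟩ := hfc v
  refine ⟨M.map (Embedding.induce _).toHom, hM.map _ Subtype.val_injective, ?_⟩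
  rw [Subgraph.map_verts, Subgraph.isSpanning_iff.mp hMspan, Set.image_univ]
  ext x
  simp

theorem IsFactorCritical.exists_adj {V : Type*} [Nontrivial V] {G : SimpleGraph V}
    (hfc : IsFactorCritical G) (v : V) : ∃ w, G.Adj v w := by
  obtain ⟨z, hzv⟩ := exists_ne v
  obtain ⟨M, hM, hMz⟩ := hfc.exists_isMatching_verts_eq_compl z
  obtain ⟨w, hvw, -⟩ := hM (hMz ▸ hzv.symm : v ∈ M.verts)
  exact ⟨w, hvw.adj_sub⟩

theorem stmt7 {V : Type*} [Fintype V] (G : SimpleGraph V)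
    (hfc : IsFactorCritical G) (hn : 3 ≤ Fintype.card V) :
    (∃ (v : V) (c : G.Walk v v) (M : G.Subgraph),
        c.IsCycle ∧ Odd c.length ∧ M.IsMatching ∧
        Disjoint M.verts {w | w ∈ c.support} ∧
        M.verts ∪ {w | w ∈ c.support} = Set.univ) ∧
      perNullity G = 0 := by
  have : Nontrivial V := Fintype.one_lt_card_iff_nontrivial.mp (by omega)
  obtain ⟨u⟩ : Nonempty V := inferInstance
  obtain ⟨v, huv⟩ := hfc.exists_adj u
  obtain ⟨Mu, hMu, hMu_verts⟩ := hfc.exists_isMatching_verts_eq_compl u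
  obtain ⟨Mv, hMv, hMv_verts⟩ := hfc.exists_isMatching_verts_eq_compl v
  obtain ⟨c, M, hc, hodd, hM, hdisj, hcover⟩ :=
    exists_odd_cycle_isMatching_of_isMatching_compl hMu hMv hMu_verts hMv_verts huv
  obtain ⟨σ, hσ⟩ := exists_perm_adj_of_isCycle_of_isMatching hc hM hdisj hcover
  exact ⟨⟨u, c, M, hc, hodd, hM, hdisj, hcover⟩, perNullity_eq_zero_of_exists_perm hσ⟩
end

section
/- Every component of the subgraph of G induced by D(G) is factor-critical, where D(G) is the set of vertices missed by at least one maximum matching of G. -/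
open Polynomial SimpleGraph

/-!
Let `B` be the set of vertices outside `D = D(G)` with a neighbour in `D`, and let `G.isolate s` be
`G` with all edges at `s` deleted. For `b ∈ B`, `D(G.isolate {b}) = D ∪ {b}` (Edmonds' stability
lemma): the nontrivial inclusion comes from exchanging along an alternating path between a maximum
matching of `G.isolate {b}` and a maximum matching of `G` missing a neighbour of `b` in `D`.
Iterating, `G' := G.isolate B` has `D ⊆ D(G')` and the same edges inside `D` as `G`.

Gallai's argument: a maximum matching `M` never misses two distinct vertices `u`, `v` joined by a
path in `G[D]`. Otherwise let `t` follow `u` on the path; a maximum matching missing `t` that shares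
as many edges with `M` as possible, exchanged along the alternating path from `u`, gives a maximum
matching missing both `t` and `v`, and we induct along the path.

Finally let `v` lie in a component `c` of `G[D]`, and let `M` be a maximum matching of `G'` missing
`v`. By Gallai's argument in `G'`, `M` covers every other vertex of `c`; its partner is not in `B`,
so it lies in `D` and hence in `c`. Thus `M` restricts to a perfect matching of `c - v`.
-/

namespace SimpleGraph

variable {V : Type*} {G : SimpleGraph V}

namespace Subgraph

variable {M N M₁ N₁ : G.Subgraph} {a b u v x₁ x₂ y : V}

lemma IsMatching.mem_verts_iff (hM : M.IsMatching) : v ∈ M.verts ↔ ∃ w, M.Adj v w := by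
  rw [← hM.support_eq_verts, mem_support]

lemma IsMatching.mem_pair_iff (hM : M.IsMatching) (hab : M.Adj a b) {x y : V}
    (hxy : M.Adj x y) : x ∈ ({a, b} : Set V) ↔ s(x, y) = s(a, b) := by
  constructor
  · rintro (rfl | rfl)
    · rw [hM.eq_of_adj_left hxy hab]
    · rw [hM.eq_of_adj_left hxy hab.symm, Sym2.eq_swap]
  · intro h
    rcases Sym2.eq_iff.1 h with ⟨rfl, -⟩ | ⟨rfl, -⟩ <;> simp

lemma IsMatching.deleteVerts_pair (hM : M.IsMatching) (hab : M.Adj a b) :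
    (M.deleteVerts {a, b}).IsMatching := by
  rintro v ⟨hv, hvab⟩
  obtain ⟨w, hvw, hw⟩ := hM hv
  have hwab : w ∉ ({a, b} : Set V) := by
    rw [hM.mem_pair_iff hab hvw.symm, Sym2.eq_swap, ← hM.mem_pair_iff hab hvw]
    exact hvab
  exact ⟨w, deleteVerts_adj.2 ⟨hv, hvab, M.edge_vert hvw.symm, hwab, hvw⟩,
    fun y hy => hw y (deleteVerts_adj.1 hy).2.2.2.2⟩

lemma IsMatching.edgeSet_deleteVerts_pair (hM : M.IsMatching) (hab : M.Adj a b) :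
    (M.deleteVerts {a, b}).edgeSet = M.edgeSet \ {s(a, b)} := by
  ext e
  refine e.ind fun x y => ?_
  rw [Subgraph.mem_edgeSet, deleteVerts_adj, Set.mem_sdiff, Subgraph.mem_edgeSet,
    Set.mem_singleton_iff]
  constructor
  · rintro ⟨-, hx, -, -, hxy⟩
    exact ⟨hxy, fun h => hx ((hM.mem_pair_iff hab hxy).2 h)⟩
  · rintro ⟨hxy, hne⟩
    refine ⟨M.edge_vert hxy, fun h => hne ((hM.mem_pair_iff hab hxy).1 h),
      M.edge_vert hxy.symm, fun h => hne ?_, hxy⟩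
    rw [Sym2.eq_swap, ← hM.mem_pair_iff hab hxy.symm]
    exact h

lemma IsMatching.ncard_edgeSet_deleteVerts_pair [Finite V] (hM : M.IsMatching)
    (hab : M.Adj a b) : (M.deleteVerts {a, b}).edgeSet.ncard + 1 = M.edgeSet.ncard := by
  rw [hM.edgeSet_deleteVerts_pair hab]
  exact Set.ncard_sdiff_singleton_add_one hab

lemma IsMatching.sup_subgraphOfAdj (hM : M.IsMatching) (h : G.Adj a b) (ha : a ∉ M.verts)
    (hb : b ∉ M.verts) : (M ⊔ G.subgraphOfAdj h).IsMatching := by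
  refine hM.sup (.subgraphOfAdj h) ?_
  rw [hM.support_eq_verts, support_subgraphOfAdj, Set.disjoint_insert_right,
    Set.disjoint_singleton_right]
  exact ⟨ha, hb⟩

lemma verts_sup_subgraphOfAdj (h : G.Adj a b) :
    (M ⊔ G.subgraphOfAdj h).verts = insert a (insert b M.verts) := by
  simp

lemma ncard_edgeSet_sup_subgraphOfAdj [Finite V] (h : G.Adj a b) (ha : a ∉ M.verts) :
    (M ⊔ G.subgraphOfAdj h).edgeSet.ncard = M.edgeSet.ncard + 1 := by
  rw [edgeSet_sup, edgeSet_subgraphOfAdj, Set.union_singleton, Set.ncard_insert_of_notMem]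
  exact fun he => ha (M.edge_vert he)

/- `M₁ = M ∆ P` and `N₁ = N ∆ P` for an `M`-`N` alternating path `P` from `u` to `y` whose first
edge lies in `N`: of even length in `IsEvenExchange`, of odd length in `IsOddExchange`. -/

structure IsEvenExchange (M N M₁ N₁ : G.Subgraph) (u y : V) : Prop where
  mem_verts : y ∈ M.verts
  isMatching_left : M₁.IsMatching
  isMatching_right : N₁.IsMatching
  verts_left : M₁.verts ⊆ insert u (M.verts \ {y})
  ncard_left : M₁.edgeSet.ncard = M.edgeSet.ncard
  verts_right : N₁.verts ⊆ insert y (N.verts \ {u})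
  ncard_right : N₁.edgeSet.ncard = N.edgeSet.ncard
  inter_ssubset : M.edgeSet ∩ N.edgeSet ⊂ M.edgeSet ∩ N₁.edgeSet

structure IsOddExchange (M N M₁ N₁ : G.Subgraph) (u y : V) : Prop where
  ne : y ≠ u
  mem_verts : y ∈ N.verts
  isMatching_left : M₁.IsMatching
  isMatching_right : N₁.IsMatching
  verts_left : M₁.verts ⊆ insert u (insert y M.verts)
  ncard_left : M₁.edgeSet.ncard = M.edgeSet.ncard + 1
  verts_right : N₁.verts ⊆ N.verts \ {u, y}
  ncard_right : N₁.edgeSet.ncard + 1 = N.edgeSet.ncard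

lemma IsMatching.edge_notMem_edgeSet (hN : N.IsMatching) (hu : u ∉ M.verts)
    (hux₁ : N.Adj u x₁) (hx₁x₂ : M.Adj x₁ x₂) : s(x₁, x₂) ∉ N.edgeSet := fun h =>
  hu (hN.eq_of_adj_left (Subgraph.mem_edgeSet.1 h) hux₁.symm ▸ M.edge_vert hx₁x₂.symm)

lemma inter_subset_inter_deleteVerts (hM : M.IsMatching) (hN : N.IsMatching) (hu : u ∉ M.verts)
    (hux₁ : N.Adj u x₁) (hx₁x₂ : M.Adj x₁ x₂) :
    M.edgeSet ∩ N.edgeSet ⊆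
      (M.deleteVerts {x₁, x₂}).edgeSet ∩ (N.deleteVerts {u, x₁}).edgeSet := by
  rw [hM.edgeSet_deleteVerts_pair hx₁x₂, hN.edgeSet_deleteVerts_pair hux₁]
  rintro e ⟨heM, heN⟩
  refine ⟨⟨heM, ?_⟩, heN, ?_⟩
  · rintro rfl
    exact hN.edge_notMem_edgeSet hu hux₁ hx₁x₂ heN
  · rintro rfl
    exact hu (M.edge_vert heM)

lemma inter_ssubset_inter_sup (hN : N.IsMatching) (hu : u ∉ M.verts) (hux₁ : N.Adj u x₁)
    (hx₁x₂ : M.Adj x₁ x₂) {K : G.Subgraph} (hK : M.edgeSet ∩ N.edgeSet ⊆ K.edgeSet) :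
    M.edgeSet ∩ N.edgeSet ⊂ M.edgeSet ∩ (K ⊔ G.subgraphOfAdj (M.adj_sub hx₁x₂)).edgeSet := by
  rw [edgeSet_sup, edgeSet_subgraphOfAdj]
  have hsub : M.edgeSet ∩ N.edgeSet ⊆ M.edgeSet ∩ (K.edgeSet ∪ {s(x₁, x₂)}) :=
    fun e he => ⟨he.1, .inl (hK he)⟩
  exact (Set.ssubset_iff_of_subset hsub).2 ⟨s(x₁, x₂), ⟨hx₁x₂, .inr rfl⟩,
    fun h => hN.edge_notMem_edgeSet hu hux₁ hx₁x₂ h.2⟩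

variable [Finite V]

lemma isOddExchange_of_notMem_verts (hM : M.IsMatching) (hN : N.IsMatching) (hu : u ∉ M.verts)
    (hux₁ : N.Adj u x₁) (hx₁ : x₁ ∉ M.verts) :
    IsOddExchange M N (M ⊔ G.subgraphOfAdj (N.adj_sub hux₁)) (N.deleteVerts {u, x₁}) u x₁ where
  ne := (N.adj_sub hux₁).ne'
  mem_verts := N.edge_vert hux₁.symm
  isMatching_left := hM.sup_subgraphOfAdj _ hu hx₁
  isMatching_right := hN.deleteVerts_pair hux₁
  verts_left := (verts_sup_subgraphOfAdj _).le
  ncard_left := ncard_edgeSet_sup_subgraphOfAdj _ hu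
  verts_right := subset_rfl
  ncard_right := hN.ncard_edgeSet_deleteVerts_pair hux₁

lemma isEvenExchange_of_notMem_verts (hM : M.IsMatching) (hN : N.IsMatching)
    (hu : u ∉ M.verts) (hux₁ : N.Adj u x₁) (hx₁x₂ : M.Adj x₁ x₂) (hx₂ : x₂ ∉ N.verts) :
    IsEvenExchange M N (M.deleteVerts {x₁, x₂} ⊔ G.subgraphOfAdj (N.adj_sub hux₁))
      (N.deleteVerts {u, x₁} ⊔ G.subgraphOfAdj (M.adj_sub hx₁x₂)) u x₂ := by
  have hu' : u ∉ (M.deleteVerts {x₁, x₂}).verts := fun h => hu h.1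
  have hx₁' : x₁ ∉ (N.deleteVerts {u, x₁}).verts := fun h => h.2 (by simp)
  refine ⟨M.edge_vert hx₁x₂.symm, (hM.deleteVerts_pair hx₁x₂).sup_subgraphOfAdj _ hu' (by simp),
    (hN.deleteVerts_pair hux₁).sup_subgraphOfAdj _ hx₁' (fun h => hx₂ h.1), ?_, ?_, ?_, ?_,
    inter_ssubset_inter_sup hN hu hux₁ hx₁x₂
      ((inter_subset_inter_deleteVerts hM hN hu hux₁ hx₁x₂).trans Set.inter_subset_right)⟩
  · have := M.edge_vert hx₁x₂
    have := (M.adj_sub hx₁x₂).ne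
    intro z
    simp only [verts_sup_subgraphOfAdj, deleteVerts_verts, Set.mem_insert_iff, Set.mem_sdiff,
      Set.mem_singleton_iff]
    grind
  · rw [ncard_edgeSet_sup_subgraphOfAdj _ hu', hM.ncard_edgeSet_deleteVerts_pair hx₁x₂]
  · have := N.edge_vert hux₁.symm
    have := (N.adj_sub hux₁).ne
    intro z
    simp only [verts_sup_subgraphOfAdj, deleteVerts_verts, Set.mem_insert_iff, Set.mem_sdiff,
      Set.mem_singleton_iff]
    grind
  · rw [ncard_edgeSet_sup_subgraphOfAdj _ hx₁', hN.ncard_edgeSet_deleteVerts_pair hux₁]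

lemma IsEvenExchange.cons (hM : M.IsMatching) (hN : N.IsMatching) (hu : u ∉ M.verts)
    (hux₁ : N.Adj u x₁) (hx₁x₂ : M.Adj x₁ x₂) (hx₂ : x₂ ∈ N.verts)
    (h : IsEvenExchange (M.deleteVerts {x₁, x₂}) (N.deleteVerts {u, x₁}) M₁ N₁ x₂ y) :
    IsEvenExchange M N (M₁ ⊔ G.subgraphOfAdj (N.adj_sub hux₁))
      (N₁ ⊔ G.subgraphOfAdj (M.adj_sub hx₁x₂)) u y := by
  have := M.edge_vert hx₁x₂
  have := M.edge_vert hx₁x₂.symm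
  have := N.edge_vert hux₁.symm
  have := (M.adj_sub hx₁x₂).ne
  have := (N.adj_sub hux₁).ne
  have hy := h.mem_verts
  have hM₁ := h.verts_left
  have hN₁ := h.verts_right
  simp only [Set.subset_def, deleteVerts_verts, Set.mem_insert_iff, Set.mem_sdiff,
    Set.mem_singleton_iff] at hy hM₁ hN₁
  have hu₁ : u ∉ M₁.verts := fun hz => by grind
  have hx₁M₁ : x₁ ∉ M₁.verts := fun hz => by grind
  have hx₁N₁ : x₁ ∉ N₁.verts := fun hz => by grind
  have hx₂N₁ : x₂ ∉ N₁.verts := fun hz => by grind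
  refine ⟨hy.1, h.isMatching_left.sup_subgraphOfAdj _ hu₁ hx₁M₁,
    h.isMatching_right.sup_subgraphOfAdj _ hx₁N₁ hx₂N₁, ?_, ?_, ?_, ?_,
    inter_ssubset_inter_sup hN hu hux₁ hx₁x₂
      ((inter_subset_inter_deleteVerts hM hN hu hux₁ hx₁x₂).trans
        (Set.subset_inter_iff.1 h.inter_ssubset.subset).2)⟩
  · intro z
    simp only [verts_sup_subgraphOfAdj, Set.mem_insert_iff, Set.mem_sdiff, Set.mem_singleton_iff]
    grind
  · rw [ncard_edgeSet_sup_subgraphOfAdj _ hu₁, h.ncard_left,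
      hM.ncard_edgeSet_deleteVerts_pair hx₁x₂]
  · intro z
    simp only [verts_sup_subgraphOfAdj, Set.mem_insert_iff, Set.mem_sdiff, Set.mem_singleton_iff]
    grind
  · rw [ncard_edgeSet_sup_subgraphOfAdj _ hx₁N₁, h.ncard_right,
      hN.ncard_edgeSet_deleteVerts_pair hux₁]

lemma IsOddExchange.cons (hM : M.IsMatching) (hN : N.IsMatching) (hu : u ∉ M.verts)
    (hux₁ : N.Adj u x₁) (hx₁x₂ : M.Adj x₁ x₂) (hx₂ : x₂ ∈ N.verts)
    (h : IsOddExchange (M.deleteVerts {x₁, x₂}) (N.deleteVerts {u, x₁}) M₁ N₁ x₂ y) :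
    IsOddExchange M N (M₁ ⊔ G.subgraphOfAdj (N.adj_sub hux₁))
      (N₁ ⊔ G.subgraphOfAdj (M.adj_sub hx₁x₂)) u y := by
  have := M.edge_vert hx₁x₂
  have := M.edge_vert hx₁x₂.symm
  have := N.edge_vert hux₁.symm
  have := (M.adj_sub hx₁x₂).ne
  have := (N.adj_sub hux₁).ne
  have := h.ne
  have hy := h.mem_verts
  have hM₁ := h.verts_left
  have hN₁ := h.verts_right
  simp only [Set.subset_def, deleteVerts_verts, Set.mem_insert_iff, Set.mem_sdiff,
    Set.mem_singleton_iff] at hy hM₁ hN₁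
  have hu₁ : u ∉ M₁.verts := fun hz => by grind
  have hx₁M₁ : x₁ ∉ M₁.verts := fun hz => by grind
  have hx₁N₁ : x₁ ∉ N₁.verts := fun hz => by grind
  have hx₂N₁ : x₂ ∉ N₁.verts := fun hz => by grind
  refine ⟨by grind, hy.1, h.isMatching_left.sup_subgraphOfAdj _ hu₁ hx₁M₁,
    h.isMatching_right.sup_subgraphOfAdj _ hx₁N₁ hx₂N₁, ?_, ?_, ?_, ?_⟩
  · intro z
    simp only [verts_sup_subgraphOfAdj, Set.mem_insert_iff]
    grind
  · rw [ncard_edgeSet_sup_subgraphOfAdj _ hu₁, h.ncard_left,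
      ← hM.ncard_edgeSet_deleteVerts_pair hx₁x₂]
  · intro z
    simp only [verts_sup_subgraphOfAdj, Set.mem_insert_iff, Set.mem_sdiff, Set.mem_singleton_iff]
    grind
  · rw [ncard_edgeSet_sup_subgraphOfAdj _ hx₁N₁, h.ncard_right,
      hN.ncard_edgeSet_deleteVerts_pair hux₁]

theorem exists_isEvenExchange_or_isOddExchange (hM : M.IsMatching) (hN : N.IsMatching)
    (hu : u ∉ M.verts) (huN : u ∈ N.verts) :
    ∃ y M₁ N₁, IsEvenExchange M N M₁ N₁ u y ∨ IsOddExchange M N M₁ N₁ u y := by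
  induction hn : M.edgeSet.ncard using Nat.strong_induction_on generalizing M N u with
  | _ n ih =>
  obtain ⟨x₁, hux₁⟩ := hN.mem_verts_iff.1 huN
  rcases em' (x₁ ∈ M.verts) with hx₁ | hx₁
  · exact ⟨x₁, _, _, .inr (isOddExchange_of_notMem_verts hM hN hu hux₁ hx₁)⟩
  obtain ⟨x₂, hx₁x₂⟩ := hM.mem_verts_iff.1 hx₁
  rcases em' (x₂ ∈ N.verts) with hx₂ | hx₂
  · exact ⟨x₂, _, _, .inl (isEvenExchange_of_notMem_verts hM hN hu hux₁ hx₁x₂ hx₂)⟩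
  have hx₂N' : x₂ ∈ (N.deleteVerts {u, x₁}).verts := by
    refine ⟨hx₂, ?_⟩
    rintro (rfl | rfl)
    exacts [hu (M.edge_vert hx₁x₂.symm), (M.adj_sub hx₁x₂).ne rfl]
  have hlt : (M.deleteVerts {x₁, x₂}).edgeSet.ncard < n := by
    rw [← hn, ← hM.ncard_edgeSet_deleteVerts_pair hx₁x₂]
    omega
  obtain ⟨y, M₁, N₁, h | h⟩ := ih _ hlt (hM.deleteVerts_pair hx₁x₂) (hN.deleteVerts_pair hux₁)
    (by simp) hx₂N' rfl
  · exact ⟨y, _, _, .inl (h.cons hM hN hu hux₁ hx₁x₂ hx₂)⟩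
  · exact ⟨y, _, _, .inr (h.cons hM hN hu hux₁ hx₁x₂ hx₂)⟩

end Subgraph

section Isolate

variable {M : G.Subgraph} {s t : Set V} {x y : V}

def isolate (G : SimpleGraph V) (s : Set V) : SimpleGraph V where
  Adj x y := G.Adj x y ∧ x ∉ s ∧ y ∉ s
  symm := ⟨fun _ _ h => ⟨h.1.symm, h.2.2, h.2.1⟩⟩
  loopless := ⟨fun x h => G.loopless.irrefl x h.1⟩

@[simp]
lemma isolate_adj : (G.isolate s).Adj x y ↔ G.Adj x y ∧ x ∉ s ∧ y ∉ s := .rfl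

@[simp]
lemma isolate_empty : G.isolate ∅ = G := by
  ext
  simp

@[simp]
lemma isolate_isolate : (G.isolate s).isolate t = G.isolate (s ∪ t) := by
  ext
  simp only [isolate_adj, Set.mem_union]
  tauto

lemma isolate_le : G.isolate s ≤ G := fun _ _ h => h.1

namespace Subgraph

def transfer {G' : SimpleGraph V} (M : G.Subgraph) (h : ∀ ⦃x y⦄, M.Adj x y → G'.Adj x y) :
    G'.Subgraph where
  verts := M.verts
  Adj := M.Adj
  adj_sub hxy := h hxy
  edge_vert := M.edge_vert
  symm := M.symm

variable {G' : SimpleGraph V} {h : ∀ ⦃x y⦄, M.Adj x y → G'.Adj x y}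

@[simp]
lemma edgeSet_transfer : (M.transfer h).edgeSet = M.edgeSet := rfl

lemma IsMatching.transfer (hM : M.IsMatching) : (M.transfer h).IsMatching := hM

lemma IsMatching.notMem_verts_isolate {W : (G.isolate s).Subgraph} (hW : W.IsMatching)
    (hx : x ∈ s) : x ∉ W.verts := fun hxW => by
  obtain ⟨y, hxy⟩ := hW.mem_verts_iff.1 hxW
  exact (isolate_adj.1 (W.adj_sub hxy)).2.1 hx

end Subgraph

end Isolate

open Subgraph

section MaximumMatching

variable {M N : G.Subgraph} {b t u v : V}

lemma IsMaximumMatching.of_ncard_le (hM : IsMaximumMatching M) (hN : N.IsMatching)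
    (h : M.edgeSet.ncard ≤ N.edgeSet.ncard) : IsMaximumMatching N :=
  ⟨hN, fun N' hN' => (hM.2 N' hN').trans h⟩

lemma IsMaximumMatching.mem_verts_of_adj [Finite V] (hM : IsMaximumMatching M) (h : G.Adj u v)
    (hu : u ∉ M.verts) : v ∈ M.verts := by
  by_contra hv
  have := hM.2 _ (hM.1.sup_subgraphOfAdj h hu hv)
  rw [Subgraph.ncard_edgeSet_sup_subgraphOfAdj h hu] at this
  omega

lemma IsMaximumMatching.exists_adj_of_notMem_DSet (hM : IsMaximumMatching M) (hb : b ∉ DSet G) :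
    ∃ q, M.Adj b q :=
  hM.1.mem_verts_iff.1 (by_contra fun h => hb ⟨M, hM, h⟩)

lemma IsMaximumMatching.exists_notMem_verts_of_adj [Finite V] (hM : IsMaximumMatching M)
    (hu : u ∉ M.verts) (hv : v ∉ M.verts) (huv : u ≠ v) (hut : G.Adj u t) (ht : t ∈ DSet G) :
    ∃ N : G.Subgraph, IsMaximumMatching N ∧ t ∉ N.verts ∧ v ∉ N.verts := by
  obtain ⟨N, ⟨hN, htN⟩, hNopt⟩ := Set.exists_max_image
    {N : G.Subgraph | IsMaximumMatching N ∧ t ∉ N.verts} (fun N => (M.edgeSet ∩ N.edgeSet).ncard)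
    (Set.toFinite _) ht
  obtain ⟨y, M₁, N₁, h | h⟩ :=
    exists_isEvenExchange_or_isOddExchange hM.1 hN.1 hu (hN.mem_verts_of_adj hut.symm htN)
  · have htM : t ∈ M.verts := hM.mem_verts_of_adj hut hu
    by_cases hyt : y = t
    · refine ⟨M₁, hM.of_ncard_le h.isMatching_left h.ncard_left.ge, fun ht₁ => ?_, fun hv₁ => ?_⟩
      · rcases h.verts_left ht₁ with rfl | ⟨-, hty⟩
        exacts [hut.ne' rfl, hty hyt.symm]
      · rcases h.verts_left hv₁ with rfl | ⟨hv', -⟩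
        exacts [huv rfl, hv hv']
    · have htN₁ : t ∉ N₁.verts := fun ht₁ => by
        rcases h.verts_right ht₁ with rfl | ⟨ht', -⟩
        exacts [hyt rfl, htN ht']
      have := hNopt N₁ ⟨hN.of_ncard_le h.isMatching_right h.ncard_right.ge, htN₁⟩
      exact absurd this (Set.ncard_lt_ncard h.inter_ssubset).not_ge
  · have := hM.2 M₁ h.isMatching_left
    rw [h.ncard_left] at this
    omega

lemma IsMaximumMatching.eq_of_reachable [Finite V] {S : Set V} (hS : S ⊆ DSet G)
    (hM : IsMaximumMatching M) {u v : S} (huv : (G.induce S).Reachable u v) (hu : ↑u ∉ M.verts)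
    (hv : ↑v ∉ M.verts) : u = v := by
  obtain ⟨p⟩ := huv
  induction p generalizing M with
  | nil => rfl
  | @cons u t v hut p ih =>
    by_contra huv
    by_cases htv : t = v
    · exact hv (hM.mem_verts_of_adj (htv ▸ hut) hu)
    obtain ⟨N, hN, htN, hvN⟩ := hM.exists_notMem_verts_of_adj hu hv
      (fun h => huv (Subtype.ext h)) hut (hS t.2)
    exact htv (ih hN htN hvN)

section MatchingNumber

variable [Fintype V]

lemma bddAbove_ncard_edgeSet_isMatching :
    BddAbove {n | ∃ M : G.Subgraph, M.IsMatching ∧ M.edgeSet.ncard = n} :=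
  ⟨Nat.card (Sym2 V), by rintro _ ⟨M, -, rfl⟩; exact Set.ncard_le_card _⟩

lemma ncard_edgeSet_le_matchingNumber (hM : M.IsMatching) :
    M.edgeSet.ncard ≤ matchingNumber G :=
  le_csSup bddAbove_ncard_edgeSet_isMatching ⟨M, hM, rfl⟩

lemma exists_isMatching_ncard_edgeSet_eq_matchingNumber :
    ∃ M : G.Subgraph, M.IsMatching ∧ M.edgeSet.ncard = matchingNumber G := by
  have hbot : (⊥ : G.Subgraph).IsMatching := fun _ h => h.elim
  exact Nat.sSup_mem (s := {n | ∃ M : G.Subgraph, M.IsMatching ∧ M.edgeSet.ncard = n})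
    ⟨_, ⊥, hbot, rfl⟩ bddAbove_ncard_edgeSet_isMatching

lemma isMaximumMatching_iff :
    IsMaximumMatching M ↔ M.IsMatching ∧ M.edgeSet.ncard = matchingNumber G := by
  refine ⟨fun hM => ⟨hM.1, (ncard_edgeSet_le_matchingNumber hM.1).antisymm ?_⟩,
    fun hM => ⟨hM.1, fun _ hN => hM.2 ▸ ncard_edgeSet_le_matchingNumber hN⟩⟩
  obtain ⟨N, hN, hNn⟩ := exists_isMatching_ncard_edgeSet_eq_matchingNumber (G := G)
  exact hNn ▸ hM.2 N hN

lemma exists_isMaximumMatching : ∃ M : G.Subgraph, IsMaximumMatching M :=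
  exists_isMatching_ncard_edgeSet_eq_matchingNumber.imp fun _ => isMaximumMatching_iff.2

lemma mem_DSet_of_isMatching (hM : M.IsMatching) (hcard : matchingNumber G ≤ M.edgeSet.ncard)
    (hv : v ∉ M.verts) : v ∈ DSet G :=
  ⟨M, ⟨hM, fun _ hN => (ncard_edgeSet_le_matchingNumber hN).trans hcard⟩, hv⟩

end MatchingNumber

end MaximumMatching

section Stability

variable [Fintype V] {M : G.Subgraph} {s : Set V} {b q w : V}

lemma ncard_edgeSet_isolate_lt_matchingNumber (hb : b ∉ DSet G) {W : (G.isolate {b}).Subgraph}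
    (hW : W.IsMatching) : W.edgeSet.ncard < matchingNumber G := by
  by_contra! h
  have hW' := hW.transfer (h := fun _ _ hxy => isolate_le (W.adj_sub hxy))
  exact hb (mem_DSet_of_isMatching hW' (by rwa [edgeSet_transfer])
    (hW.notMem_verts_isolate rfl))

lemma exists_isMatching_isolate_of_adj (hM : M.IsMatching) (hbq : M.Adj b q) :
    ∃ W : (G.isolate {b}).Subgraph,
      W.IsMatching ∧ W.verts = M.verts \ {b, q} ∧ W.edgeSet.ncard + 1 = M.edgeSet.ncard := by
  refine ⟨(M.deleteVerts {b, q}).transfer fun x y hxy => ?_,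
    (hM.deleteVerts_pair hbq).transfer, rfl, ?_⟩
  · rw [deleteVerts_adj] at hxy
    exact isolate_adj.2
      ⟨hxy.2.2.2.2.adj_sub, fun hx => hxy.2.1 (.inl hx), fun hy => hxy.2.2.2.1 (.inl hy)⟩
  · rw [edgeSet_transfer, hM.ncard_edgeSet_deleteVerts_pair hbq]

lemma matchingNumber_isolate_add_one (hb : b ∉ DSet G) :
    matchingNumber (G.isolate {b}) + 1 = matchingNumber G := by
  obtain ⟨W, hW, hWn⟩ := exists_isMatching_ncard_edgeSet_eq_matchingNumber (G := G.isolate {b})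
  obtain ⟨M, hM⟩ := exists_isMaximumMatching (G := G)
  obtain ⟨q, hbq⟩ := hM.exists_adj_of_notMem_DSet hb
  obtain ⟨W₀, hW₀, -, hW₀n⟩ := exists_isMatching_isolate_of_adj hM.1 hbq
  have := ncard_edgeSet_isolate_lt_matchingNumber hb hW
  have := ncard_edgeSet_le_matchingNumber hW₀
  have := (isMaximumMatching_iff.1 hM).2
  omega

lemma DSet_subset_DSet_isolate (hb : b ∉ DSet G) : DSet G ⊆ DSet (G.isolate {b}) := by
  rintro w ⟨M, hM, hwM⟩
  obtain ⟨q, hbq⟩ := hM.exists_adj_of_notMem_DSet hb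
  obtain ⟨W, hW, hWv, hWn⟩ := exists_isMatching_isolate_of_adj hM.1 hbq
  refine mem_DSet_of_isMatching hW ?_ (by rw [hWv]; exact fun h => hwM h.1)
  have := matchingNumber_isolate_add_one hb
  have := (isMaximumMatching_iff.1 hM).2
  omega

lemma mem_DSet_isolate_singleton : b ∈ DSet (G.isolate {b}) := by
  obtain ⟨W, hW⟩ := exists_isMaximumMatching (G := G.isolate {b})
  exact ⟨W, hW, hW.1.notMem_verts_isolate rfl⟩

lemma mem_DSet_of_mem_DSet_isolate (hb : b ∈ BSet G) (hw : w ∈ DSet (G.isolate {b}))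
    (hwb : w ≠ b) : w ∈ DSet G := by
  by_contra hwD
  obtain ⟨hbD, d, hd, hbd⟩ := hb
  obtain ⟨W, hW, hwW⟩ := hw
  set M₀ := W.transfer (h := fun _ _ hxy => isolate_le (W.adj_sub hxy))
  have hM₀n : M₀.edgeSet.ncard + 1 = matchingNumber G := by
    rw [edgeSet_transfer, (isMaximumMatching_iff.1 hW).2, matchingNumber_isolate_add_one hbD]
  have hM₀ : M₀.IsMatching := hW.1.transfer
  have hbM₀ : b ∉ M₀.verts := hW.1.notMem_verts_isolate rfl
  obtain ⟨N, hN, hdN⟩ := hd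
  have hNn := (isMaximumMatching_iff.1 hN).2
  have hwN : w ∈ N.verts := by_contra fun h => hwD ⟨N, hN, h⟩
  obtain ⟨y, M₁, N₁, h | h⟩ :=
    exists_isEvenExchange_or_isOddExchange hM₀ hN.1 hwW hwN
  · refine hwD (mem_DSet_of_isMatching h.isMatching_right (by rw [h.ncard_right, hNn]) ?_)
    rintro hw₁
    rcases h.verts_right hw₁ with hwy | ⟨-, hw⟩
    exacts [hwW (hwy ▸ h.mem_verts), hw rfl]
  by_cases hyb : y = b
  · subst y
    have hbN₁ : b ∉ N₁.verts := fun h' => (h.verts_right h').2 (.inr rfl)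
    have hdN₁ : d ∉ N₁.verts := fun h' => hdN (h.verts_right h').1
    refine hwD (mem_DSet_of_isMatching (h.isMatching_right.sup_subgraphOfAdj hbd hbN₁ hdN₁)
      (by rw [ncard_edgeSet_sup_subgraphOfAdj hbd hbN₁, h.ncard_right, hNn]) ?_)
    rw [verts_sup_subgraphOfAdj]
    rintro (rfl | rfl | hw₁)
    exacts [hwb rfl, hdN hwN, (h.verts_right hw₁).2 (.inl rfl)]
  · refine hbD (mem_DSet_of_isMatching h.isMatching_left (by rw [h.ncard_left]; omega) ?_)
    intro hb₁
    rcases h.verts_left hb₁ with rfl | rfl | hb₁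
    exacts [hwb rfl, hyb rfl, hbM₀ hb₁]

lemma DSet_isolate_singleton (hb : b ∈ BSet G) : DSet (G.isolate {b}) = insert b (DSet G) := by
  refine subset_antisymm (fun w hw => ?_)
    (Set.insert_subset mem_DSet_isolate_singleton (DSet_subset_DSet_isolate hb.1))
  by_cases hwb : w = b
  exacts [.inl hwb, .inr (mem_DSet_of_mem_DSet_isolate hb hw hwb)]

lemma DSet_isolate (hs : s ⊆ BSet G) : DSet (G.isolate s) = DSet G ∪ s := by
  induction s, s.toFinite using Set.Finite.induction_on with
  | empty => simp
  | @insert a s ha _ ih =>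
    have ih := ih ((Set.subset_insert a s).trans hs)
    obtain ⟨haD, d, hd, had⟩ := hs (Set.mem_insert a s)
    have hdB : d ∉ BSet G := fun h => h.1 hd
    have haB : a ∈ BSet (G.isolate s) := by
      refine ⟨?_, d, ?_, isolate_adj.2 ⟨had, ha, fun h => hdB (hs (.inr h))⟩⟩
      · rw [ih]
        rintro (h | h)
        exacts [haD h, ha h]
      · rw [ih]
        exact .inl hd
    rw [Set.insert_eq, Set.union_comm {a}, ← isolate_isolate, DSet_isolate_singleton haB, ih]
    ext
    simp [or_comm]

end Stability

lemma isFactorCritical_of_forall_exists_isMatching {W : Type*} {H : SimpleGraph W} (f : H ↪g G)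
    (h : ∀ v, ∃ M : G.Subgraph, M.IsMatching ∧ ∀ x ≠ v, ∃ y ≠ v, M.Adj (f x) (f y)) :
    IsFactorCritical H := by
  intro v
  obtain ⟨M, hM, hv⟩ := h v
  refine ⟨M.comap (f.toHom.comp (Embedding.induce _).toHom),
    Subgraph.isPerfectMatching_iff.2 fun x => ?_⟩
  obtain ⟨y, hyv, hxy⟩ := hv x x.2
  exact ⟨⟨y, hyv⟩, ⟨f.map_adj_iff.1 (M.adj_sub hxy), hxy⟩,
    fun y' hy' => Subtype.ext (f.injective (hM.eq_of_adj_left hy'.2 hxy))⟩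

lemma induce_isolate_BSet : (G.isolate (BSet G)).induce (DSet G) = G.induce (DSet G) := by
  ext x y
  simp only [comap_adj, Function.Embedding.subtype_apply, isolate_adj, and_iff_left_iff_imp]
  exact fun _ => ⟨fun h => h.1 x.2, fun h => h.1 y.2⟩

end SimpleGraph

open SimpleGraph Subgraph in
theorem stmt10 {V : Type*} [Fintype V] (G : SimpleGraph V) :
    ∀ c : (G.induce (DSet G)).ConnectedComponent,
      IsFactorCritical ((G.induce (DSet G)).induce c.supp) := by
  intro c
  refine isFactorCritical_of_forall_exists_isMatching
    ((Embedding.induce _).comp (Embedding.induce _)) fun v => ?_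
  have hD : DSet G ⊆ DSet (G.isolate (BSet G)) := by
    rw [DSet_isolate subset_rfl]
    exact Set.subset_union_left
  obtain ⟨M, hM, hvM⟩ := hD v.1.2
  refine ⟨M.transfer fun _ _ h => isolate_le (M.adj_sub h), hM.1.transfer,
    fun x hxv => ?_⟩
  have hxM : x.1.1 ∈ M.verts := by
    by_contra hxM
    refine hxv (Subtype.ext (hM.eq_of_reachable hD ?_ hxM hvM))
    rw [induce_isolate_BSet]
    exact ConnectedComponent.exact (x.2.trans v.2.symm)
  obtain ⟨p, hxp⟩ := hM.1.mem_verts_iff.1 hxM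
  obtain ⟨hG, -, hpB⟩ := isolate_adj.1 (M.adj_sub hxp)
  have hpD : p ∈ DSet G := by_contra fun h => hpB ⟨h, x.1.1, x.1.2, hG.symm⟩
  refine ⟨⟨⟨p, hpD⟩, (ConnectedComponent.connectedComponentMk_eq_of_adj
    (G := G.induce (DSet G)) (v := ⟨p, hpD⟩) hG.symm).trans x.2⟩, fun h => ?_, hxp⟩
  exact hvM (congrArg (fun y => y.1.1) h ▸ M.edge_vert hxp.symm)
end

section
/- Let D(G) be the set of vertices missed by some maximum matching of G, B(G) the set of vertices outside D(G) adjacent to D(G), and C(G) the remaining vertices. Then the subgraph of G induced by C(G) has a perfect matching. -/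
open Polynomial SimpleGraph

/-!
Fix a maximum matching `M`; its restriction to `C(G)` is the required perfect matching. A vertex
`c ∈ C(G)` is covered by `M`, and its partner `w` is not in `D(G)`, since otherwise `c ∈ B(G)`.
Suppose `w` had a neighbour `d ∈ D(G)`, missed by a maximum matching `N`. The component `K` of `d`
in `M ∪ N` is an alternating path starting at `d`; re-matching its edges two at a time shows that
every `M`-edge meeting `K` has an endpoint in `D(G)`, so `c, w ∉ K`. Trading `M` for `N` on `K`
gives a maximum matching that misses `d` and still contains `cw`, and replacing `cw` by `wd` then
exposes `c`, contradicting `c ∉ D(G)`.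
-/

namespace SimpleGraph.Subgraph

variable {V : Type*} {G : SimpleGraph V} {M N : G.Subgraph} {s : Set V} {u v : V}

theorem IsMatching.ncard_verts_eq_two_mul [Finite V] (h : M.IsMatching) :
    M.verts.ncard = 2 * M.edgeSet.ncard := by
  classical
  have := Fintype.ofFinite V
  rw [← M.image_coe_edgeSet_coe,
    Set.ncard_image_of_injective _ (Sym2.map.injective Subtype.val_injective),
    ← coe_edgeFinset, Set.ncard_coe_finset, ← M.coe.sum_degrees_eq_twice_card_edges]
  have hdeg (v : M.verts) : M.coe.degree v = 1 := by
    rw [coe_degree]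
    convert isMatching_iff_forall_degree.mp h v v.2
  calc M.verts.ncard = ∑ _v : M.verts, 1 := by simp [← Nat.card_coe_set_eq]
    _ = _ := Finset.sum_congr rfl fun v _ => by convert (hdeg v).symm

theorem IsMatching.deleteVerts (h : M.IsMatching) (hs : ∀ ⦃x y⦄, M.Adj x y → x ∈ s → y ∈ s) :
    (M.deleteVerts s).IsMatching := by
  rintro x ⟨hxM, hxs⟩
  obtain ⟨y, hxy, hy⟩ := h hxM
  exact ⟨y, deleteVerts_adj.mpr ⟨hxM, hxs, M.edge_vert hxy.symm, fun hys => hxs (hs hxy.symm hys),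
    hxy⟩, fun z hz => hy z (deleteVerts_adj.mp hz).2.2.2.2⟩

theorem IsMatching.sup_subgraphOfAdj_s11 (h : M.IsMatching) (huv : G.Adj u v) (hu : u ∉ M.verts)
    (hv : v ∉ M.verts) : (M ⊔ G.subgraphOfAdj huv).IsMatching := by
  refine h.sup (.subgraphOfAdj huv) ?_
  rw [h.support_eq_verts, (IsMatching.subgraphOfAdj huv).support_eq_verts, subgraphOfAdj_verts,
    Set.disjoint_right]
  rintro x (rfl | rfl) <;> assumption

theorem IsMatching.deleteVerts_sup_deleteVerts_compl (hM : M.IsMatching) (hN : N.IsMatching)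
    (hMs : ∀ ⦃x y⦄, M.Adj x y → x ∈ s → y ∈ s) (hNs : ∀ ⦃x y⦄, N.Adj x y → x ∈ s → y ∈ s) :
    (M.deleteVerts s ⊔ N.deleteVerts sᶜ).IsMatching := by
  have hM' := hM.deleteVerts hMs
  have hN' := hN.deleteVerts (s := sᶜ) fun x y hxy hx hy => hx (hNs hxy.symm hy)
  refine hM'.sup hN' ?_
  rw [hM'.support_eq_verts, hN'.support_eq_verts, deleteVerts_verts, deleteVerts_verts]
  exact Set.disjoint_sdiff_left.mono_right fun x hx => not_not.mp hx.2

end SimpleGraph.Subgraph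

section MaximumMatching

open Subgraph

variable {V : Type*} [Finite V] {G : SimpleGraph V} {M N : G.Subgraph} {s : Set V} {a b d : V}

theorem isMaximumMatching_iff_ncard_verts : IsMaximumMatching M ↔
    M.IsMatching ∧ ∀ N : G.Subgraph, N.IsMatching → N.verts.ncard ≤ M.verts.ncard := by
  refine and_congr_right fun hM => forall₂_congr fun N hN => ?_
  rw [hM.ncard_verts_eq_two_mul, hN.ncard_verts_eq_two_mul]
  omega

theorem IsMaximumMatching.ncard_verts_le (hM : IsMaximumMatching M) (hN : N.IsMatching) :
    N.verts.ncard ≤ M.verts.ncard :=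
  (isMaximumMatching_iff_ncard_verts.mp hM).2 N hN

theorem IsMaximumMatching.of_ncard_verts_le (hM : IsMaximumMatching M) (hN : N.IsMatching)
    (h : M.verts.ncard ≤ N.verts.ncard) : IsMaximumMatching N :=
  isMaximumMatching_iff_ncard_verts.mpr ⟨hN, fun _ hP => (hM.ncard_verts_le hP).trans h⟩

theorem exists_isMaximumMatching (G : SimpleGraph V) : ∃ M : G.Subgraph, IsMaximumMatching M := by
  obtain ⟨M, hM, hmax⟩ := Set.exists_max_image {M : G.Subgraph | M.IsMatching}
    (fun M => M.edgeSet.ncard) (Set.toFinite _) ⟨⊥, fun _ hv => hv.elim⟩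
  exact ⟨M, hM, hmax⟩

theorem IsMaximumMatching.exists_exchange (hM : IsMaximumMatching M) (hab : M.Adj a b)
    (had : G.Adj a d) (hd : d ∉ M.verts) :
    ∃ M' : G.Subgraph, IsMaximumMatching M' ∧ b ∉ M'.verts ∧
      ∀ ⦃x y⦄, M.Adj x y → x ≠ a → y ≠ a → M'.Adj x y := by
  have hb_of_a {y} (hy : M.Adj a y) : y = b := hM.1.eq_of_adj_left hy hab
  have ha_of_b {y} (hy : M.Adj b y) : y = a := (hM.1.eq_of_adj_right hab hy.symm).symm
  have hclosed : ∀ ⦃x y⦄, M.Adj x y → x ∈ ({a, b} : Set V) → y ∈ ({a, b} : Set V) := by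
    rintro x y hxy (rfl | rfl)
    exacts [Or.inr (hb_of_a hxy), Or.inl (ha_of_b hxy)]
  have hsub : ({a, b} : Set V) ⊆ M.verts := by
    rintro x (rfl | rfl)
    exacts [M.edge_vert hab, M.edge_vert hab.symm]
  have hdb : d ≠ b := fun h => hd (h ▸ hsub (by simp))
  have hM' := (hM.1.deleteVerts hclosed).sup_subgraphOfAdj_s11 had (by simp) fun h => hd h.1
  refine ⟨_, hM.of_ncard_verts_le hM' ?_, ?_, fun x y hxy hx hy => Or.inl ?_⟩
  · rw [verts_sup, deleteVerts_verts, subgraphOfAdj_verts, Set.ncard_union_eq,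
      Set.ncard_pair had.ne, ← Set.ncard_sdiff_add_ncard_of_subset hsub,
      Set.ncard_pair (M.adj_sub hab).ne]
    rw [Set.disjoint_right]
    rintro x (rfl | rfl)
    exacts [fun h => h.2 (by simp), fun h => hd h.1]
  · simp [hdb.symm, (M.adj_sub hab).ne.symm]
  · have hxb : x ≠ b := fun h => hy (ha_of_b (h ▸ hxy))
    have hyb : y ≠ b := fun h => hx (ha_of_b (h ▸ hxy.symm))
    exact deleteVerts_adj.mpr ⟨M.edge_vert hxy, by simp [hx, hxb], M.edge_vert hxy.symm,
      by simp [hy, hyb], hxy⟩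

theorem IsMaximumMatching.deleteVerts_sup_deleteVerts_compl (hM : IsMaximumMatching M)
    (hN : IsMaximumMatching N) (hMs : ∀ ⦃x y⦄, M.Adj x y → x ∈ s → y ∈ s)
    (hNs : ∀ ⦃x y⦄, N.Adj x y → x ∈ s → y ∈ s) :
    IsMaximumMatching (M.deleteVerts s ⊔ N.deleteVerts sᶜ) := by
  have hncard (P Q : G.Subgraph) :
      (P.deleteVerts s ⊔ Q.deleteVerts sᶜ).verts.ncard =
        (P.verts \ s).ncard + (Q.verts ∩ s).ncard := by
    rw [verts_sup, deleteVerts_verts, deleteVerts_verts, Set.sdiff_compl,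
      Set.ncard_union_eq (Set.disjoint_sdiff_left.mono_right Set.inter_subset_right)]
  -- The reverse trade is a matching too, so it cannot beat `N`.
  have hrev := hN.ncard_verts_le (hN.1.deleteVerts_sup_deleteVerts_compl hM.1 hNs hMs)
  have hMN := hN.ncard_verts_le hM.1
  have hNM := hM.ncard_verts_le hN.1
  refine hM.of_ncard_verts_le (hM.1.deleteVerts_sup_deleteVerts_compl hN.1 hMs hNs) ?_
  rw [hncard] at hrev ⊢
  have := Set.ncard_inter_add_ncard_sdiff_eq_ncard M.verts s
  have := Set.ncard_inter_add_ncard_sdiff_eq_ncard N.verts s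
  omega

theorem IsMaximumMatching.mem_dSet_or_mem_dSet_of_isPath {N : G.Subgraph} {d x y : V}
    (hM : IsMaximumMatching M) (hN : IsMaximumMatching N) (hd : d ∉ N.verts)
    (p : (M ⊔ N).spanningCoe.Walk d x) (hp : p.IsPath) (hxy : M.Adj x y) :
    x ∈ DSet G ∨ y ∈ DSet G := by
  have hMadj {u} (h : (M ⊔ N).spanningCoe.Adj d u) : M.Adj d u :=
    (h : M.Adj d u ∨ N.Adj d u).resolve_right fun h => hd (N.edge_vert h)
  match p, hp with
  | .nil, _ => exact Or.inl ⟨N, hN, hd⟩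
  | .cons h .nil, _ => exact Or.inr (hM.1.eq_of_adj_left (hMadj h).symm hxy ▸ ⟨N, hN, hd⟩)
  | .cons (v := p₁) h₁ (.cons (v := p₂) h₂ q), hp =>
    simp only [Walk.cons_isPath_iff, Walk.support_cons, List.mem_cons, not_or] at hp
    obtain ⟨⟨hq, hp₁q⟩, -, hdq⟩ := hp
    have hN₂ : N.Adj p₁ p₂ := by
      refine (h₂ : M.Adj p₁ p₂ ∨ N.Adj p₁ p₂).resolve_left fun h => hdq ?_
      exact hM.1.eq_of_adj_left (hMadj h₁).symm h ▸ q.start_mem_support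
    -- Re-matching `p₁` to `d` exposes `p₂`, and `q` is an alternating path of the new matching.
    obtain ⟨N', hN', hp₂, hNN'⟩ := hN.exists_exchange hN₂ (M.adj_sub (hMadj h₁)).symm hd
    refine hM.mem_dSet_or_mem_dSet_of_isPath hN' hp₂ (q.transfer _ ?_) (hq.transfer _) hxy
    intro e he
    induction e using Sym2.ind with | _ u v => ?_
    have hu : u ≠ p₁ := fun h => hp₁q (h ▸ q.fst_mem_support_of_mem_edges he)
    have hv : v ≠ p₁ := fun h => hp₁q (h ▸ q.snd_mem_support_of_mem_edges he)
    have huv : M.Adj u v ∨ N.Adj u v := q.edges_subset_edgeSet he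
    exact huv.imp_right fun h => hNN' h hu hv
termination_by p.length
decreasing_by rw [Walk.length_transfer, Walk.length_cons, Walk.length_cons]; omega

theorem IsMaximumMatching.mem_cSet_of_adj {c w : V} (hM : IsMaximumMatching M)
    (hc : c ∈ CSet G) (hcw : M.Adj c w) : w ∈ CSet G := by
  obtain ⟨hcD, hcB⟩ := not_or.mp hc
  have hwD : w ∉ DSet G := fun hw => hcB ⟨hcD, w, hw, M.adj_sub hcw⟩
  refine not_or.mpr ⟨hwD, ?_⟩
  rintro ⟨-, d, ⟨N, hN, hdN⟩, hwd⟩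
  set K := {x | (M ⊔ N).spanningCoe.Reachable d x}
  have hK {x y} (hxy : M.Adj x y) (hx : x ∈ K) : x ∈ DSet G ∨ y ∈ DSet G := by
    obtain ⟨p, hp⟩ := hx.exists_isPath
    exact hM.mem_dSet_or_mem_dSet_of_isPath hN hdN p hp hxy
  have hcK : c ∉ K := fun h => (hK hcw h).elim hcD hwD
  have hwK : w ∉ K := fun h => (hK hcw.symm h).elim hwD hcD
  have hMK : ∀ ⦃x y⦄, M.Adj x y → x ∈ K → y ∈ K :=
    fun _ _ hxy hx => hx.trans (Adj.reachable (Or.inl hxy))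
  have hNK : ∀ ⦃x y⦄, N.Adj x y → x ∈ K → y ∈ K :=
    fun _ _ hxy hx => hx.trans (Adj.reachable (Or.inr hxy))
  have hdK : d ∉ (M.deleteVerts K ⊔ N.deleteVerts Kᶜ).verts := by
    rintro (⟨-, hd⟩ | ⟨hd, -⟩)
    exacts [hd (Reachable.refl d), hdN hd]
  have hwc : (M.deleteVerts K ⊔ N.deleteVerts Kᶜ).Adj w c :=
    Or.inl (deleteVerts_adj.mpr ⟨M.edge_vert hcw.symm, hwK, M.edge_vert hcw, hcK, hcw.symm⟩)
  obtain ⟨M', hM', hcM', -⟩ :=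
    (hM.deleteVerts_sup_deleteVerts_compl hN hMK hNK).exists_exchange hwc hwd hdK
  exact hcD ⟨M', hM', hcM'⟩

end MaximumMatching

theorem stmt11 {V : Type*} [Fintype V] (G : SimpleGraph V) :
    ∃ M : (G.induce (CSet G)).Subgraph, M.IsPerfectMatching := by
  obtain ⟨M, hM⟩ := exists_isMaximumMatching G
  refine ⟨M.comap (Embedding.induce (CSet G)).toHom,
    Subgraph.isPerfectMatching_iff.mpr fun c => ?_⟩
  have hc : c.1 ∈ M.verts := not_not.mp fun h => c.2 (Or.inl ⟨M, hM, h⟩)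
  obtain ⟨w, hcw, hw⟩ := hM.1 hc
  exact ⟨⟨w, hM.mem_cSet_of_adj c.2 hcw⟩, ⟨M.adj_sub hcw, hcw⟩,
    fun w' hw' => Subtype.ext (hw _ hw'.2)⟩
end

section
/- Let G be a nontrivial connected graph. The line graph L(G) contains a perfect matching if and only if G has an even number of edges. -/
open Polynomial SimpleGraph

/-!
Orient the edges so that every vertex has even in-degree: the edges entering a common vertex form
a clique of `L(G)`, so they can be paired off inside it. An orientation is encoded by the 1-chain
`c` over `ZMod 2` of edges reversed relative to a fixed reference orientation, and reversing `c`
changes the in-degree parities by the boundary of `c`. A walk from `v` to a root `r` has boundary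
`δ v + δ r`, so in a connected graph the parities can be corrected at every vertex but `r`; the
in-degree at `r` then has the parity of the number of edges.
-/

open Finset

namespace SimpleGraph

theorem exists_isPerfectMatching_of_even_clique_fibers {W ι : Type*} [Finite W]
    {H : SimpleGraph W} (f : W → ι) (hclique : ∀ i, H.IsClique (f ⁻¹' {i}))
    (heven : ∀ i, Even (f ⁻¹' {i}).ncard) : ∃ M : H.Subgraph, M.IsPerfectMatching := by
  choose M hverts hM using fun i ↦
    ((hclique i).even_iff_exists_isMatching (Set.toFinite _)).mp (heven i)
  refine ⟨⨆ i, M i, Subgraph.IsMatching.iSup hM fun i j hij ↦ ?_, ?_⟩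
  · refine Set.disjoint_of_subset (M i).support_subset_verts (M j).support_subset_verts ?_
    rw [hverts, hverts]
    exact (Set.disjoint_singleton.mpr hij).preimage f
  · rw [Subgraph.isSpanning_iff, Subgraph.verts_iSup, Set.eq_univ_iff_forall]
    exact fun w ↦ Set.mem_iUnion.mpr ⟨f w, by rw [hverts]; rfl⟩

theorem exists_isPerfectMatching_lineGraph_of_even_fibers {V : Type*} [DecidableEq V] (G : SimpleGraph V)
    [Fintype G.edgeSet] (head : Sym2 V → V) (hhead : ∀ e ∈ G.edgeSet, head e ∈ e)
    (heven : ∀ v, Even #{e ∈ G.edgeFinset | head e = v}) :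
    ∃ M : G.lineGraph.Subgraph, M.IsPerfectMatching := by
  refine exists_isPerfectMatching_of_even_clique_fibers (fun e : G.edgeSet ↦ head e)
    (fun v e₁ he₁ e₂ he₂ hne ↦ ?_) (fun v ↦ ?_)
  · exact lineGraph_adj_iff_exists.mpr ⟨hne, v, he₁ ▸ hhead _ e₁.2, he₂ ▸ hhead _ e₂.2⟩
  · have hfiber : (fun e : G.edgeSet ↦ head e) ⁻¹' {v} =
        Subtype.val ⁻¹' {e ∈ G.edgeSet | head e = v} := by
      ext e; simp
    rw [hfiber, Set.ncard_preimage_of_injective_subset_range Subtype.val_injective (by simp)]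
    simpa [← Set.ncard_coe_finset] using heven v

/-- The head of `e` when the edges with `c e = 1` are reversed relative to the reference
orientation `e ↦ e.out.1`. -/
noncomputable def chainHead {V : Type*} (c : Sym2 V → ZMod 2) (e : Sym2 V) : V :=
  if c e = 1 then e.out.2 else e.out.1

theorem chainHead_mem {V : Type*} (c : Sym2 V → ZMod 2) (e : Sym2 V) : chainHead c e ∈ e := by
  unfold chainHead
  split_ifs
  exacts [e.out_snd_mem, e.out_fst_mem]

theorem ite_chainHead_eq {V : Type*} [DecidableEq V] {c : Sym2 V → ZMod 2} {e : Sym2 V}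
    (he : ¬e.IsDiag) (x : V) :
    (if chainHead c e = x then 1 else 0 : ZMod 2) =
      (if e.out.1 = x then 1 else 0) + if x ∈ e then c e else 0 := by
  have hout : e = s(e.out.1, e.out.2) := (Quot.out_eq e).symm
  have hne : e.out.1 ≠ e.out.2 := fun h ↦ he (hout ▸ Sym2.mk_isDiag_iff.mpr h)
  have hx : x ∈ e ↔ x = e.out.1 ∨ x = e.out.2 := by
    conv_lhs => rw [hout]
    exact Sym2.mem_iff
  obtain ht | ht : c e = 0 ∨ c e = 1 := (by decide : ∀ t : ZMod 2, t = 0 ∨ t = 1) (c e)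
  · simp [chainHead, ht]
  · simp only [chainHead, ht, if_true, hx]
    grind

variable {V : Type*} [Fintype V] [DecidableEq V]

section Boundary

variable (G : SimpleGraph V) [DecidableRel G.Adj]

def chainBoundary : (Sym2 V → ZMod 2) →ₗ[ZMod 2] (V → ZMod 2) where
  toFun c x := ∑ e ∈ G.incidenceFinset x, c e
  map_add' c d := by ext; simp [sum_add_distrib]
  map_smul' a c := by ext; simp [mul_sum]

theorem chainBoundary_single {u w : V} (h : G.Adj u w) :
    G.chainBoundary (Pi.single s(u, w) 1) = Pi.single u 1 + Pi.single w 1 := by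
  ext x
  simp only [chainBoundary, LinearMap.coe_mk, AddHom.coe_mk, Pi.single_apply, sum_ite_eq',
    mem_incidenceFinset, mk'_mem_incidenceSet_iff, h, true_and, Pi.add_apply]
  by_cases hxu : x = u
  · simp [hxu, h.ne]
  · simp [hxu]

theorem cast_card_chainHead_eq (c : Sym2 V → ZMod 2) (x : V) :
    (#{e ∈ G.edgeFinset | chainHead c e = x} : ZMod 2) =
      #{e ∈ G.edgeFinset | e.out.1 = x} + G.chainBoundary c x := by
  simp only [natCast_card_filter, chainBoundary, LinearMap.coe_mk, AddHom.coe_mk,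
    incidenceFinset_eq_filter, sum_filter, ← sum_add_distrib]
  exact sum_congr rfl fun e he ↦
    ite_chainHead_eq (G.not_isDiag_of_mem_edgeSet (mem_edgeFinset.mp he)) x

end Boundary

variable {G : SimpleGraph V} [DecidableRel G.Adj]

def Walk.chain {u v : V} (p : G.Walk u v) : Sym2 V → ZMod 2 :=
  (p.edges.map fun e ↦ Pi.single e 1).sum

theorem Walk.chainBoundary_chain {u v : V} (p : G.Walk u v) :
    G.chainBoundary p.chain = Pi.single u 1 + Pi.single v 1 := by
  induction p with
  | nil => ext x; simp [Walk.chain, CharTwo.add_self_eq_zero]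
  | @cons _ w _ h p ih =>
    rw [Walk.chain, Walk.edges_cons, List.map_cons, List.sum_cons, map_add,
      chainBoundary_single G h, ← Walk.chain, ih]
    ext x
    simp only [Pi.add_apply]
    linear_combination CharTwo.add_self_eq_zero ((Pi.single w 1 : V → ZMod 2) x)

theorem Preconnected.exists_chainBoundary_eq (hG : G.Preconnected) (r : V) (d : V → ZMod 2) :
    ∃ c, ∀ x ≠ r, G.chainBoundary c x = d x := by
  refine ⟨∑ y, d y • (hG y r).some.chain, fun x hx ↦ ?_⟩
  simp [map_sum, Walk.chainBoundary_chain, Pi.single_apply, hx]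

theorem Connected.exists_even_card_chainHead (hG : G.Connected) (heven : Even #G.edgeFinset) :
    ∃ c : Sym2 V → ZMod 2, ∀ x, Even #{e ∈ G.edgeFinset | chainHead c e = x} := by
  obtain ⟨r⟩ := hG.nonempty
  obtain ⟨c, hc⟩ :=
    hG.preconnected.exists_chainBoundary_eq r fun x ↦ #{e ∈ G.edgeFinset | e.out.1 = x}
  have hoff : ∀ x ≠ r, (#{e ∈ G.edgeFinset | chainHead c e = x} : ZMod 2) = 0 := fun x hx ↦ by
    rw [cast_card_chainHead_eq, hc x hx, CharTwo.add_self_eq_zero]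
  refine ⟨c, fun x ↦ ZMod.natCast_eq_zero_iff_even.mp ?_⟩
  obtain rfl | hx := eq_or_ne x r
  · have hsum := congrArg (Nat.cast : ℕ → ZMod 2)
      (card_eq_sum_card_fiberwise (f := chainHead c) (t := univ) (s := G.edgeFinset) (by simp))
    rwa [ZMod.natCast_eq_zero_iff_even.mpr heven, Nat.cast_sum,
      sum_eq_single x (fun y _ hy ↦ hoff y hy) (by simp), eq_comm] at hsum
  · exact hoff x hx

end SimpleGraph

theorem stmt13_general {V : Type*} [Fintype V] (G : SimpleGraph V)
    (hc : G.Connected) :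
    (∃ M : (G.lineGraph).Subgraph, M.IsPerfectMatching) ↔ Even G.edgeSet.ncard := by
  classical
  rw [Set.ncard_eq_toFinset_card', Set.toFinset_card]
  refine ⟨fun ⟨M, hM⟩ ↦ hM.even_card, fun heven ↦ ?_⟩
  obtain ⟨c, hfibers⟩ := hc.exists_even_card_chainHead (by rwa [G.edgeFinset_card])
  exact G.exists_isPerfectMatching_lineGraph_of_even_fibers (chainHead c)
    (fun e _ ↦ chainHead_mem c e) hfibers

theorem stmt13 {V : Type*} [Fintype V] (G : SimpleGraph V)
    (hnt : Nontrivial V) (hc : G.Connected) :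
    (∃ M : (G.lineGraph).Subgraph, M.IsPerfectMatching) ↔ Even G.edgeSet.ncard :=
  stmt13_general G hc
end

section
/- The line graph L(G) of a nontrivial graph G has a perfect matching if and only if every connected component of L(G) has even order. -/
/-!
Line graphs are claw-free: of three edges meeting a common edge `ab`, two contain the same
endpoint `a` or `b` and are therefore adjacent. So the theorem is an instance of Sumner's theorem
that a connected claw-free graph of even order has a perfect matching, applied to each component.

For Sumner's theorem we delete both ends of a suitable edge, keeping the graph connected, and
induct. If the diameter is at most one the graph is complete. Otherwise let `u, v` be at maximal
distance `k ≥ 2`, `w` a neighbour of `v` at distance `k - 1` from `u` and `p` a neighbour of `w` at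
distance `k - 2`. If `v` has a neighbour `z` at distance `k`, every other vertex still descends to
`u` avoiding `v, z`. Otherwise every other vertex descends to `u` avoiding `v, w`: a vertex `x` at
distance `k` whose only way down is through `w` would make `v, x, p` a claw at `w`.
-/

open Polynomial SimpleGraph

namespace SimpleGraph

variable {W : Type*} {H : SimpleGraph W}

def ClawFree (H : SimpleGraph W) : Prop :=
  ∀ ⦃c x y z : W⦄, H.Adj c x → H.Adj c y → H.Adj c z → x ≠ y → x ≠ z → y ≠ z →
    H.Adj x y ∨ H.Adj x z ∨ H.Adj y z

theorem ClawFree.induce (hH : H.ClawFree) (s : Set W) : (H.induce s).ClawFree :=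
  fun _ _ _ _ hx hy hz hxy hxz hyz => hH hx hy hz
    (Subtype.val_injective.ne hxy) (Subtype.val_injective.ne hxz) (Subtype.val_injective.ne hyz)

theorem lineGraph_clawFree {V : Type*} (G : SimpleGraph V) : G.lineGraph.ClawFree := by
  rintro ⟨e, he⟩ x y z hx hy hz hxy hxz hyz
  induction e using Sym2.ind with | _ a b => ?_
  have hmeet : ∀ f : G.edgeSet, G.lineGraph.Adj ⟨s(a, b), he⟩ f →
      a ∈ (f : Sym2 V) ∨ b ∈ (f : Sym2 V) := by
    intro f hf
    obtain ⟨-, w, hw, hwf⟩ := lineGraph_adj_iff_exists.mp hf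
    rcases Sym2.mem_iff.mp hw with rfl | rfl <;> simp [hwf]
  simp only [lineGraph_adj_iff_exists]
  rcases hmeet x hx with hxa | hxb <;> rcases hmeet y hy with hya | hyb <;>
    rcases hmeet z hz with hza | hzb
  all_goals first
    | exact Or.inl ⟨hxy, _, ‹_›, ‹_›⟩
    | exact Or.inr (Or.inl ⟨hxz, _, ‹_›, ‹_›⟩)
    | exact Or.inr (Or.inr ⟨hyz, _, ‹_›, ‹_›⟩)

theorem Connected.exists_adj_dist_add_one_eq (hconn : H.Connected) {u x : W} (hx : x ≠ u) :
    ∃ y, H.Adj x y ∧ H.dist u y + 1 = H.dist u x := by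
  obtain ⟨p, hp⟩ := hconn.exists_walk_length_eq_dist x u
  cases p with
  | nil => exact absurd rfl hx
  | @cons _ y _ hxy q =>
    refine ⟨y, hxy, le_antisymm ?_ ?_⟩
    · rw [dist_comm (u := u) (v := y), dist_comm (u := u) (v := x), ← hp, Walk.length_cons]
      exact Nat.succ_le_succ (dist_le q)
    · simpa [dist_eq_one_iff_adj.mpr hxy.symm] using hconn.dist_triangle (u := u) (v := y) (w := x)

theorem induce_preconnected_of_descent {s : Set W} {r : W} (hr : r ∈ s) (f : W → ℕ)
    (hf : ∀ x ∈ s, x ≠ r → ∃ y ∈ s, H.Adj x y ∧ f y < f x) : (H.induce s).Preconnected := by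
  suffices h : ∀ n x (hx : x ∈ s), f x = n → (H.induce s).Reachable ⟨x, hx⟩ ⟨r, hr⟩ from
    fun x y => (h _ x x.2 rfl).trans (h _ y y.2 rfl).symm
  intro n
  induction n using Nat.strong_induction_on with
  | _ n ih =>
    intro x hx hxn
    by_cases hxr : x = r
    · subst hxr; rfl
    obtain ⟨y, hy, hxy, hfy⟩ := hf x hx hxr
    exact (show (H.induce s).Adj ⟨x, hx⟩ ⟨y, hy⟩ from hxy).reachable.trans
      (ih _ (hxn ▸ hfy) y hy rfl)

theorem Connected.induce_compl_pair_preconnected_of_farthest (hconn : H.Connected) {u v z : W}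
    (hv : ∀ x, H.dist u x ≤ H.dist u v) (hz : H.dist u z = H.dist u v) (hk : 0 < H.dist u v) :
    (H.induce {v, z}ᶜ).Preconnected := by
  refine induce_preconnected_of_descent (r := u) ?_ (H.dist u) fun x _ hxu => ?_
  · have hvu : v ≠ u := by rintro rfl; simp at hk
    have hzu : z ≠ u := by rintro rfl; rw [dist_self] at hz; omega
    simp [hvu.symm, hzu.symm]
  obtain ⟨y, hxy, hdy⟩ := hconn.exists_adj_dist_add_one_eq hxu
  have hdx := hv x
  have hyv : y ≠ v := by rintro rfl; omega
  have hyz : y ≠ z := by rintro rfl; omega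
  exact ⟨y, by simp [hyv, hyz], hxy, by omega⟩

theorem ClawFree.induce_compl_pair_preconnected (hH : H.ClawFree) (hconn : H.Connected)
    {u v w : W} (hv : ∀ x, H.dist u x ≤ H.dist u v) (hk : 2 ≤ H.dist u v) (hvw : H.Adj v w)
    (hdw : H.dist u w + 1 = H.dist u v) (hlevel : ∀ z, H.Adj v z → H.dist u z ≠ H.dist u v) :
    (H.induce {v, w}ᶜ).Preconnected := by
  have hvu : v ≠ u := by rintro rfl; simp at hk
  have hwu : w ≠ u := by rintro rfl; rw [dist_self] at hdw; omega
  obtain ⟨p, hwp, hdp⟩ := hconn.exists_adj_dist_add_one_eq hwu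
  have hfar : ∀ a, H.Adj a p → H.dist u a ≠ H.dist u v := fun a hap => by
    rcases hap.diff_dist_adj (u := u) with h | h | h <;> omega
  refine induce_preconnected_of_descent (r := u) (by simp [hvu.symm, hwu.symm]) (H.dist u)
    fun x hx hxu => ?_
  simp only [Set.mem_compl_iff, Set.mem_insert_iff, Set.mem_singleton_iff, not_or] at hx
  obtain ⟨y, hxy, hdy⟩ := hconn.exists_adj_dist_add_one_eq hxu
  have hdx := hv x
  have hyv : y ≠ v := by rintro rfl; omega
  have hyw : y ≠ w := by
    rintro rfl
    rcases hH hvw.symm hxy.symm hwp (Ne.symm hx.1) (by rintro rfl; omega)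
      (by rintro rfl; omega) with h | h | h
    · exact hlevel x h (by omega)
    · exact hfar v h rfl
    · exact hfar x h (by omega)
  exact ⟨y, by simp [hyv, hyw], hxy, by omega⟩

theorem ClawFree.exists_adj_induce_compl_preconnected_of_farthest (hH : H.ClawFree)
    (hconn : H.Connected) {u v : W} (hv : ∀ x, H.dist u x ≤ H.dist u v)
    (hk : 2 ≤ H.dist u v) : ∃ x y, H.Adj x y ∧ (H.induce {x, y}ᶜ).Preconnected := by
  by_cases hlevel : ∃ z, H.Adj v z ∧ H.dist u z = H.dist u v
  · obtain ⟨z, hvz, hdz⟩ := hlevel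
    exact ⟨v, z, hvz, hconn.induce_compl_pair_preconnected_of_farthest hv hdz (by omega)⟩
  · push Not at hlevel
    have hvu : v ≠ u := by rintro rfl; simp at hk
    obtain ⟨w, hvw, hdw⟩ := hconn.exists_adj_dist_add_one_eq hvu
    exact ⟨v, w, hvw, hH.induce_compl_pair_preconnected hconn hv hk hvw hdw hlevel⟩

theorem ClawFree.exists_adj_induce_compl_preconnected [Finite W] [Nontrivial W]
    (hH : H.ClawFree) (hconn : H.Connected) :
    ∃ x y, H.Adj x y ∧ (H.induce {x, y}ᶜ).Preconnected := by
  obtain ⟨⟨u, v⟩, huv⟩ := Finite.exists_max fun q : W × W => H.dist q.1 q.2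
  by_cases hk : 2 ≤ H.dist u v
  · exact hH.exists_adj_induce_compl_preconnected_of_farthest hconn (fun x => huv (u, x)) hk
  have htop : H = ⊤ := by
    ext a b
    refine ⟨Adj.ne, fun hab => dist_eq_one_iff_adj.mp ?_⟩
    have := huv (a, b)
    have := hconn.pos_dist_of_ne hab
    dsimp only at *
    omega
  subst htop
  obtain ⟨a, b, hab⟩ := exists_pair_ne W
  exact ⟨a, b, hab, by simp⟩

theorem Subgraph.IsPerfectMatching.isMatching_map_induce {s : Set W}
    {M : (H.induce s).Subgraph} (hM : M.IsPerfectMatching) :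
    (M.map (Embedding.induce s).toHom).IsMatching ∧
      (M.map (Embedding.induce s).toHom).verts = s := by
  refine ⟨hM.1.map _ (Embedding.induce (G := H) s).injective, ?_⟩
  simp only [Subgraph.map_verts, hM.2.verts_eq_univ, Set.image_univ]
  exact Subtype.range_coe

theorem ClawFree.exists_isPerfectMatching [Finite W] (hH : H.ClawFree) (hconn : H.Preconnected)
    (heven : Even (Nat.card W)) : ∃ M : H.Subgraph, M.IsPerfectMatching := by
  induction h : Nat.card W using Nat.strong_induction_on generalizing W with
  | _ n ih =>
    rcases isEmpty_or_nonempty W with hW | hW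
    · exact ⟨⊥, fun v => isEmptyElim v, fun v => isEmptyElim v⟩
    have : Nontrivial W := by
      rw [← Finite.one_lt_card_iff_nontrivial]
      obtain ⟨k, hk⟩ := heven
      have := Nat.card_pos (α := W)
      omega
    obtain ⟨x, y, hxy, hpre⟩ := hH.exists_adj_induce_compl_preconnected ⟨hconn⟩
    set s : Set W := {x, y}ᶜ
    have hcard : Nat.card s + 2 = Nat.card W := by
      rw [Nat.card_coe_set_eq, ← Set.ncard_pair hxy.ne, add_comm, Set.ncard_add_ncard_compl]
    have heven' : Even (Nat.card s) := by
      rw [← hcard, Nat.even_add] at heven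
      exact heven.mpr even_two
    obtain ⟨M, hM⟩ := ih (Nat.card s) (by omega) (hH.induce s) hpre heven' rfl
    obtain ⟨hMm, hMv⟩ := hM.isMatching_map_induce
    refine ⟨_ ⊔ H.subgraphOfAdj hxy, hMm.sup (.subgraphOfAdj hxy) ?_, fun v => ?_⟩
    · rw [hMm.support_eq_verts, (Subgraph.IsMatching.subgraphOfAdj hxy).support_eq_verts, hMv,
        subgraphOfAdj_verts]
      exact disjoint_compl_left
    · rw [Subgraph.verts_sup, hMv, subgraphOfAdj_verts, Set.compl_union_self]
      trivial

theorem ClawFree.exists_isPerfectMatching_of_even_ncard_supp [Finite W] (hH : H.ClawFree)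
    (heven : ∀ c : H.ConnectedComponent, Even c.supp.ncard) :
    ∃ M : H.Subgraph, M.IsPerfectMatching := by
  have hcomp (c : H.ConnectedComponent) : ∃ M : H.Subgraph, M.IsMatching ∧ M.verts = c.supp := by
    obtain ⟨M, hM⟩ := (hH.induce c.supp).exists_isPerfectMatching
      c.connected_toSimpleGraph.preconnected (by rw [Nat.card_coe_set_eq]; exact heven c)
    exact ⟨_, hM.isMatching_map_induce⟩
  choose M hMm hMv using hcomp
  refine ⟨⨆ c, M c, Subgraph.IsMatching.iSup hMm fun c c' hne => ?_, fun v => ?_⟩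
  · dsimp only
    rw [(hMm c).support_eq_verts, (hMm c').support_eq_verts, hMv, hMv]
    exact pairwise_disjoint_supp_connectedComponent _ hne
  · rw [Subgraph.verts_iSup]
    exact Set.mem_iUnion.mpr ⟨H.connectedComponentMk v, by rw [hMv]; rfl⟩

end SimpleGraph

theorem stmt14_general {V : Type*} [Fintype V] (G : SimpleGraph V) :
    (∃ M : (G.lineGraph).Subgraph, M.IsPerfectMatching) ↔
      ∀ c : (G.lineGraph).ConnectedComponent, Even c.supp.ncard := by
  classical
  refine ⟨fun ⟨M, hM⟩ c => ?_, (lineGraph_clawFree G).exists_isPerfectMatching_of_even_ncard_supp⟩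
  simpa [← Nat.card_coe_set_eq, Nat.card_eq_fintype_card] using c.even_card_of_isPerfectMatching hM

theorem stmt14 {V : Type*} [Fintype V] (G : SimpleGraph V) (hnt : Nontrivial V) :
    (∃ M : (G.lineGraph).Subgraph, M.IsPerfectMatching) ↔
      ∀ c : (G.lineGraph).ConnectedComponent, Even c.supp.ncard :=
  stmt14_general G
end

section
/- If G is a connected graph with at least 3 edges and an odd number of edges, then the line graph L(G) contains a near-perfect matching (a matching covering all but exactly one vertex of L(G)). -/
open Polynomial SimpleGraph

/-!
Induct on finite edge sets `s` that are connected in the line graph, proving the stronger claim: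
if `|s|` is even then `s` splits into pairs of edges sharing a vertex, and if `|s|` is odd it does
so after removing one edge, which can be chosen through any prescribed vertex `r` met by `s`.
For the step, remove an edge `e = r w` of `s`. What remains falls into at most two linked pieces,
`A` hanging at `r` and `B` hanging at `w`. An odd piece is paired by induction up to one edge at
its attachment vertex; that edge is paired with `e`, or, when both pieces are odd, the one from
`A` is left over. When both pieces are even, `e` itself is left over.
-/

namespace SimpleGraph

section Matchable

variable {α : Type*} {H : SimpleGraph α}

def Matchable (H : SimpleGraph α) (t : Set α) : Prop :=
  ∃ M : H.Subgraph, M.IsMatching ∧ M.verts = t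

lemma matchable_empty : H.Matchable ∅ :=
  ⟨⊥, fun _ hv => hv.elim, rfl⟩

lemma matchable_pair {a b : α} (hab : H.Adj a b) : H.Matchable {a, b} :=
  ⟨H.subgraphOfAdj hab, .subgraphOfAdj hab, rfl⟩

lemma Matchable.union {s t : Set α} (hs : H.Matchable s) (ht : H.Matchable t)
    (hst : Disjoint s t) : H.Matchable (s ∪ t) := by
  obtain ⟨M, hM, rfl⟩ := hs
  obtain ⟨N, hN, rfl⟩ := ht
  exact ⟨M ⊔ N, hM.sup hN (by rwa [hM.support_eq_verts, hN.support_eq_verts]), rfl⟩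

lemma Matchable.insert_of_sdiff {s : Set α} {a b : α} (hs : H.Matchable (s \ {b}))
    (hb : b ∈ s) (ha : a ∉ s) (hab : H.Adj a b) : H.Matchable (insert a s) := by
  have hdisj : Disjoint ({a, b} : Set α) (s \ {b}) := by
    rw [Set.disjoint_insert_left, Set.disjoint_singleton_left]
    exact ⟨fun h => ha h.1, fun h => h.2 rfl⟩
  have h := (matchable_pair hab).union hs hdisj
  rwa [Set.insert_union, Set.singleton_union, Set.insert_sdiff_singleton,
    Set.insert_eq_of_mem hb] at h

end Matchable

open scoped Classical

section EdgeChain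

variable {V : Type*} {G : SimpleGraph V}

def EdgeChain (s : Finset G.edgeSet) : G.edgeSet → G.edgeSet → Prop :=
  Relation.ReflTransGen fun e f =>
    e ∈ s ∧ f ∈ s ∧ ∃ v, v ∈ (e : Sym2 V) ∧ v ∈ (f : Sym2 V)

def EdgeLinked (s : Finset G.edgeSet) : Prop :=
  ∀ e ∈ s, ∀ f ∈ s, EdgeChain s e f

def Touches (s : Finset G.edgeSet) (v : V) : Prop :=
  ∃ e ∈ s, v ∈ (e : Sym2 V)

variable {s : Finset G.edgeSet} {e f : G.edgeSet} {u v w : V}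

lemma EdgeChain.symm (h : EdgeChain s e f) : EdgeChain s f e := by
  induction h with
  | refl => exact .refl
  | tail _ hab ih =>
    obtain ⟨ha, hb, v, hva, hvb⟩ := hab
    exact ih.head ⟨hb, ha, v, hvb, hva⟩

lemma EdgeChain.of_mem (he : e ∈ s) (hf : f ∈ s) (hve : v ∈ (e : Sym2 V))
    (hvf : v ∈ (f : Sym2 V)) : EdgeChain s e f :=
  .single ⟨he, hf, v, hve, hvf⟩

lemma EdgeChain.filter {P : G.edgeSet → Prop} [DecidablePred P] (h : EdgeChain s e f)
    (he : P e) (hP : ∀ a b, EdgeChain s a b → P a → P b) : EdgeChain (s.filter P) e f := by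
  induction h with
  | refl => exact .refl
  | @tail a b hea hab ih =>
    have ha : P a := hP e a hea he
    exact ih.tail ⟨Finset.mem_filter.2 ⟨hab.1, ha⟩,
      Finset.mem_filter.2 ⟨hab.2.1, hP a b (.single hab) ha⟩, hab.2.2⟩

lemma EdgeChain.exists_erase_of_ne (h : EdgeChain s f e) (hfe : f ≠ e) :
    ∃ g ∈ s.erase e,
      EdgeChain (s.erase e) g f ∧ ∃ v ∈ (e : Sym2 V), v ∈ (g : Sym2 V) := by
  induction h using Relation.ReflTransGen.head_induction_on with
  | refl => exact absurd rfl hfe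
  | @head a c hac _ ih =>
    obtain ⟨ha, hc, v, hva, hvc⟩ := hac
    by_cases hce : c = e
    · subst hce
      exact ⟨a, Finset.mem_erase.2 ⟨hfe, ha⟩, .refl, v, hvc, hva⟩
    · obtain ⟨g, hg, hgc, hmeet⟩ := ih hce
      have hca : c ∈ s.erase e ∧ a ∈ s.erase e :=
        ⟨Finset.mem_erase.2 ⟨hce, hc⟩, Finset.mem_erase.2 ⟨hfe, ha⟩⟩
      exact ⟨g, hg, hgc.tail ⟨hca.1, hca.2, v, hvc, hva⟩, hmeet⟩

noncomputable def edgeClass (s : Finset G.edgeSet) (v : V) : Finset G.edgeSet :=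
  {f ∈ s | ∃ g ∈ s, v ∈ (g : Sym2 V) ∧ EdgeChain s g f}

lemma mem_edgeClass :
    f ∈ edgeClass s v ↔ f ∈ s ∧ ∃ g ∈ s, v ∈ (g : Sym2 V) ∧ EdgeChain s g f :=
  Finset.mem_filter

lemma touches_edgeClass (h : (edgeClass s v).Nonempty) : Touches (edgeClass s v) v := by
  obtain ⟨f, hf⟩ := h
  obtain ⟨-, g, hg, hvg, -⟩ := mem_edgeClass.1 hf
  exact ⟨g, mem_edgeClass.2 ⟨hg, g, hg, hvg, .refl⟩, hvg⟩

lemma edgeChain_of_mem_edgeClass (he : e ∈ edgeClass s v) (hf : f ∈ edgeClass s v) :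
    EdgeChain s e f := by
  obtain ⟨-, g, hg, hvg, hge⟩ := mem_edgeClass.1 he
  obtain ⟨-, g', hg', hvg', hg'f⟩ := mem_edgeClass.1 hf
  exact hge.symm.trans ((EdgeChain.of_mem hg hg' hvg hvg').trans hg'f)

lemma edgeLinked_edgeClass : EdgeLinked (edgeClass s v) := by
  intro e he f hf
  refine (edgeChain_of_mem_edgeClass he hf).filter (mem_edgeClass.1 he).2 ?_
  rintro a b hab ⟨g, hg, hvg, hga⟩
  exact ⟨g, hg, hvg, hga.trans hab⟩

lemma EdgeLinked.erase_eq_edgeClass_union (hs : EdgeLinked s) (he : e ∈ s)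
    (hew : (e : Sym2 V) = s(u, w)) :
    s.erase e = edgeClass (s.erase e) u ∪ edgeClass (s.erase e) w := by
  refine subset_antisymm (fun f hf => ?_)
    (Finset.union_subset (Finset.filter_subset _ _) (Finset.filter_subset _ _))
  obtain ⟨g, hg, hgf, v, hve, hvg⟩ :=
    (hs f (Finset.mem_of_mem_erase hf) e he).exists_erase_of_ne (Finset.ne_of_mem_erase hf)
  rw [hew, Sym2.mem_iff] at hve
  rw [Finset.mem_union]
  rcases hve with rfl | rfl
  · exact .inl (mem_edgeClass.2 ⟨hf, g, hg, hvg, hgf⟩)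
  · exact .inr (mem_edgeClass.2 ⟨hf, g, hg, hvg, hgf⟩)

lemma edgeLinked_of_eq_edgeClass_union {t : Finset G.edgeSet}
    (ht : t = edgeClass t u ∪ edgeClass t w) (hu : e ∈ edgeClass t u)
    (hw : e ∈ edgeClass t w) : EdgeLinked t := by
  have hchain : ∀ f ∈ t, EdgeChain t f e := by
    intro f hf
    rw [ht, Finset.mem_union] at hf
    rcases hf with hf | hf
    · exact edgeChain_of_mem_edgeClass hf hu
    · exact edgeChain_of_mem_edgeClass hf hw
  exact fun f hf g hg => (hchain f hf).trans (hchain g hg).symm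

lemma EdgeLinked.exists_split (hs : EdgeLinked s) (he : e ∈ s)
    (hew : (e : Sym2 V) = s(u, w)) :
    ∃ A B : Finset G.edgeSet, s = insert e (A ∪ B) ∧ e ∉ A ∪ B ∧ Disjoint A B ∧
      EdgeLinked A ∧ EdgeLinked B ∧
      (A.Nonempty → Touches A u) ∧ (B.Nonempty → Touches B w) := by
  suffices ∃ A B : Finset G.edgeSet, A ∪ B = s.erase e ∧ Disjoint A B ∧
      EdgeLinked A ∧ EdgeLinked B ∧
      (A.Nonempty → Touches A u) ∧ (B.Nonempty → Touches B w) by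
    obtain ⟨A, B, hAB, h⟩ := this
    exact ⟨A, B, by rw [hAB, Finset.insert_erase he], hAB ▸ s.notMem_erase e, h⟩
  have hunion := hs.erase_eq_edgeClass_union he hew
  by_cases hd : Disjoint (edgeClass (s.erase e) u) (edgeClass (s.erase e) w)
  · exact ⟨_, _, hunion.symm, hd, edgeLinked_edgeClass, edgeLinked_edgeClass,
      touches_edgeClass, touches_edgeClass⟩
  -- If the two classes meet, `s.erase e` is linked and serves as `A`, with `B = ∅`.
  · obtain ⟨f, hfu, hfw⟩ := Finset.not_disjoint_iff.1 hd
    obtain ⟨g, hg, hug⟩ := touches_edgeClass ⟨f, hfu⟩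
    refine ⟨s.erase e, ∅, by simp, Finset.disjoint_empty_right _,
      edgeLinked_of_eq_edgeClass_union hunion hfu hfw, by simp [EdgeLinked],
      fun _ => ⟨g, Finset.filter_subset _ _ hg, hug⟩, fun h => absurd h (by simp)⟩

end EdgeChain

section Pairable

variable {V : Type*} {G : SimpleGraph V} {s A B : Finset G.edgeSet} {e : G.edgeSet} {u w : V}

def Pairable (s : Finset G.edgeSet) : Prop :=
  (Even s.card → G.lineGraph.Matchable s) ∧
    (Odd s.card → ∀ r : V, Touches s r →
      ∃ f ∈ s, r ∈ (f : Sym2 V) ∧ G.lineGraph.Matchable (↑s \ {f}))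

lemma Pairable.matchable_insert (hA : Pairable A) (hodd : Odd A.card)
    (huA : A.Nonempty → Touches A u) (heA : e ∉ A) (hue : u ∈ (e : Sym2 V)) :
    G.lineGraph.Matchable (insert e ↑A) := by
  obtain ⟨f, hf, huf, hM⟩ := hA.2 hodd u (huA (Finset.card_pos.1 hodd.pos))
  exact hM.insert_of_sdiff hf heA
    (lineGraph_adj_iff_exists.2 ⟨fun h => heA (h ▸ hf), u, hue, huf⟩)

lemma Pairable.matchable_insert_union (hA : Pairable A) (hB : Pairable B) (hd : Disjoint A B)
    (heA : e ∉ A) (heB : e ∉ B) (hue : u ∈ (e : Sym2 V)) (hwe : w ∈ (e : Sym2 V))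
    (huA : A.Nonempty → Touches A u) (hwB : B.Nonempty → Touches B w)
    (hodd : Odd (A.card + B.card)) : G.lineGraph.Matchable (insert e (↑A ∪ ↑B)) := by
  have hdAB : Disjoint (↑A : Set G.edgeSet) ↑B := Finset.disjoint_coe.2 hd
  rcases Nat.even_or_odd A.card with hA' | hA'
  · rw [← Set.union_insert]
    exact (hA.1 hA').union (hB.matchable_insert (by grind) hwB heB hwe)
      (Set.disjoint_insert_right.2 ⟨heA, hdAB⟩)
  · rw [← Set.insert_union]
    exact (hA.matchable_insert hA' huA heA hue).union (hB.1 (by grind))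
      (Set.disjoint_insert_left.2 ⟨heB, hdAB⟩)

lemma Pairable.exists_matchable_insert_union_sdiff (hA : Pairable A) (hB : Pairable B)
    (hd : Disjoint A B) (heA : e ∉ A) (heB : e ∉ B) (hue : u ∈ (e : Sym2 V))
    (hwe : w ∈ (e : Sym2 V)) (huA : A.Nonempty → Touches A u) (hwB : B.Nonempty → Touches B w)
    (hev : Even (A.card + B.card)) :
    ∃ f ∈ insert e (A ∪ B), u ∈ (f : Sym2 V) ∧
      G.lineGraph.Matchable (insert e (↑A ∪ ↑B) \ {f}) := by
  have hdAB : Disjoint (↑A : Set G.edgeSet) ↑B := Finset.disjoint_coe.2 hd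
  rcases Nat.even_or_odd A.card with hA' | hA'
  · refine ⟨e, Finset.mem_insert_self _ _, hue, ?_⟩
    rw [Set.insert_sdiff_self_of_notMem (by simp [heA, heB])]
    exact (hA.1 hA').union (hB.1 (by grind)) hdAB
  · obtain ⟨f, hf, huf, hM⟩ := hA.2 hA' u (huA (Finset.card_pos.1 hA'.pos))
    refine ⟨f, by simp [hf], huf, ?_⟩
    have hfB : f ∉ B := Finset.disjoint_left.1 hd hf
    have hfe : f ≠ e := fun h => heA (h ▸ hf)
    convert hM.union (hB.matchable_insert (by grind) hwB heB hwe)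
      (Set.disjoint_insert_right.2 ⟨fun h => heA h.1, hdAB.mono_left Set.sdiff_subset⟩) using 1
    ext x
    simp only [Set.mem_sdiff, Set.mem_insert_iff, Set.mem_union, Finset.mem_coe,
      Set.mem_singleton_iff]
    grind

theorem EdgeLinked.pairable (hs : EdgeLinked s) : Pairable s := by
  induction s using Finset.strongInduction with
  | H s ih =>
  have step : ∀ e ∈ s, ∀ r ∈ (e : Sym2 V), (Even s.card → G.lineGraph.Matchable s) ∧
      (Odd s.card → ∃ f ∈ s, r ∈ (f : Sym2 V) ∧ G.lineGraph.Matchable (↑s \ {f})) := by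
    intro e he r hr
    obtain ⟨w, hew⟩ := Sym2.mem_iff_exists.1 hr
    have hwe : w ∈ (e : Sym2 V) := hew ▸ Sym2.mem_mk_right r w
    obtain ⟨A, B, rfl, heAB, hd, hA, hB, hrA, hwB⟩ := hs.exists_split he hew
    obtain ⟨heA, heB⟩ := Finset.notMem_union.1 heAB
    have hsub := Finset.ssubset_insert heAB
    replace hA := ih A (Finset.subset_union_left.trans_ssubset hsub) hA
    replace hB := ih B (Finset.subset_union_right.trans_ssubset hsub) hB
    rw [Finset.card_insert_of_notMem heAB, Finset.card_union_of_disjoint hd, Finset.coe_insert,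
      Finset.coe_union]
    exact ⟨fun hev => hA.matchable_insert_union hB hd heA heB hr hwe hrA hwB
        (Nat.not_even_iff_odd.1 (Nat.even_add_one.1 hev)),
      fun hodd => hA.exists_matchable_insert_union_sdiff hB hd heA heB hr hwe hrA hwB
        (Nat.not_odd_iff_even.1 (Nat.odd_add_one.1 hodd))⟩
  refine ⟨fun hev => ?_, fun hodd r ⟨e, he, hr⟩ => (step e he r hr).2 hodd⟩
  obtain rfl | ⟨e, he⟩ := s.eq_empty_or_nonempty
  · simpa using matchable_empty
  · exact (step e he _ (Sym2.out_fst_mem _)).1 hev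

end Pairable

section Connected

variable {V : Type*} {G : SimpleGraph V} [Fintype G.edgeSet]

lemma Walk.edgeChain_univ {a b : V} (p : G.Walk a b) {e f : G.edgeSet}
    (hae : a ∈ (e : Sym2 V)) (hbf : b ∈ (f : Sym2 V)) : EdgeChain Finset.univ e f := by
  induction p generalizing e with
  | nil => exact .of_mem (Finset.mem_univ e) (Finset.mem_univ f) hae hbf
  | @cons a c _ h _ ih =>
    let g : G.edgeSet := ⟨s(a, c), h⟩
    exact (EdgeChain.of_mem (Finset.mem_univ e) (Finset.mem_univ g) hae
      (Sym2.mem_mk_left a c)).trans (ih (e := g) (Sym2.mem_mk_right a c) hbf)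

lemma Connected.edgeLinked_univ (hc : G.Connected) :
    EdgeLinked (Finset.univ : Finset G.edgeSet) :=
  fun e _ f _ => (hc.preconnected _ _).some.edgeChain_univ
    (Sym2.out_fst_mem (e : Sym2 V)) (Sym2.out_fst_mem (f : Sym2 V))

end Connected

end SimpleGraph

theorem stmt15_general {V : Type*} (G : SimpleGraph V) (hc : G.Connected)
    (hodd : Odd G.edgeSet.ncard) :
    ∃ M : (G.lineGraph).Subgraph, M.IsMatching ∧ (M.verts)ᶜ.ncard = 1 := by
  have := (Set.finite_of_ncard_ne_zero hodd.pos.ne').fintype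
  have hcard : (Finset.univ : Finset G.edgeSet).card = G.edgeSet.ncard := by
    rw [Finset.card_univ, Set.ncard_eq_toFinset_card', Set.toFinset_card]
  obtain ⟨e, he⟩ := Finset.card_pos.1 (hcard ▸ hodd.pos)
  obtain ⟨f, -, -, M, hM, hMf⟩ :=
    hc.edgeLinked_univ.pairable.2 (hcard ▸ hodd) _ ⟨e, he, Sym2.out_fst_mem _⟩
  refine ⟨M, hM, ?_⟩
  rw [hMf, Finset.coe_univ, ← Set.compl_eq_univ_sdiff, compl_compl, Set.ncard_singleton]

theorem stmt15 {V : Type*} [Fintype V] (G : SimpleGraph V) (hc : G.Connected)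
    (h3 : 3 ≤ G.edgeSet.ncard) (hodd : Odd G.edgeSet.ncard) :
    ∃ M : (G.lineGraph).Subgraph, M.IsMatching ∧ (M.verts)ᶜ.ncard = 1 :=
  stmt15_general G hc hodd
end

section
/- If G is a 2-edge-connected graph with at least 3 edges and an odd number of edges, then the line graph L(G) is factor-critical. -/
/-!
Delete the edge `e`: by 2-edge-connectivity `G - e` is connected, and it has an even number of
edges, so it suffices that the line graph of a connected graph with an even number of edges has a
perfect matching. Orient the edges so that every in-degree is even: the in-degrees sum to the
number of edges, so vertices of odd in-degree come in pairs, and reversing a path between two of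
them fixes the parity at both ends without changing it anywhere else. The edges entering a common
vertex then form a clique of even size in the line graph, and these cliques partition its vertices.
-/

open Polynomial SimpleGraph

namespace SimpleGraph

open Finset

variable {V W : Type*}

theorem Iso.exists_isPerfectMatching {G : SimpleGraph V} {G' : SimpleGraph W} (f : G ≃g G')
    {M : G.Subgraph} (hM : M.IsPerfectMatching) : ∃ M' : G'.Subgraph, M'.IsPerfectMatching :=
  ⟨M.map f.toHom, (Subgraph.Iso.isMatching_map f).mpr hM.1,
    fun w => ⟨f.symm w, hM.2 _, f.apply_symm_apply w⟩⟩

theorem exists_isPerfectMatching_of_isClique_fibers [Finite V] {H : SimpleGraph V} {α : Type*}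
    (g : V → α) (hclique : ∀ a, H.IsClique (g ⁻¹' {a})) (heven : ∀ a, Even (g ⁻¹' {a}).ncard) :
    ∃ M : H.Subgraph, M.IsPerfectMatching := by
  choose M hverts hM using fun a =>
    ((hclique a).even_iff_exists_isMatching (Set.toFinite _)).mp (heven a)
  refine ⟨⨆ a, M a, Subgraph.IsMatching.iSup hM fun a b hab => ?_, fun v => ?_⟩
  · dsimp only
    rw [(hM a).support_eq_verts, (hM b).support_eq_verts, hverts, hverts]
    exact (Set.disjoint_singleton.mpr hab).preimage g
  · rw [Subgraph.verts_iSup, Set.mem_iUnion]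
    exact ⟨g v, by simp [hverts]⟩

theorem exists_dart_edge_eq {G : SimpleGraph V} (e : G.edgeSet) : ∃ d : G.Dart, d.edge = e := by
  obtain ⟨e, he⟩ := e
  induction e with
  | _ a b => exact ⟨⟨(a, b), he⟩, rfl⟩

section Orientation

variable {G : SimpleGraph V} [DecidableEq V]

theorem Dart.ite_symm_snd_eq (d : G.Dart) (v : V) :
    (if d.symm.snd = v then 1 else 0 : ZMod 2) =
      (if d.snd = v then 1 else 0) + if v ∈ d.edge then 1 else 0 := by
  have hne := d.fst_ne_snd
  simp only [Dart.edge, Sym2.mem_iff]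
  by_cases h₁ : d.fst = v <;> by_cases h₂ : d.snd = v <;> simp_all [eq_comm (a := v)]
  decide

def reverseAlong (o : G.edgeSet → G.Dart) (l : List (Sym2 V)) : G.edgeSet → G.Dart :=
  fun e => if (e : Sym2 V) ∈ l then (o e).symm else o e

theorem edge_reverseAlong {o : G.edgeSet → G.Dart} (ho : ∀ e, (o e).edge = e)
    (l : List (Sym2 V)) (e : G.edgeSet) : (reverseAlong o l e).edge = e := by
  unfold reverseAlong
  split_ifs <;> simp [Dart.edge_symm, ho]

variable [Fintype G.edgeSet]

/- An orientation of `G` is encoded as `o : G.edgeSet → G.Dart` with `(o e).edge = e`;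
`(o e).snd` is the head of `e`. -/
def inDegreeOf (o : G.edgeSet → G.Dart) (v : V) : ℕ := #{e | (o e).snd = v}

theorem card_filter_mem_list_eq_countP {l : List (Sym2 V)} (hl : l.Nodup) (hlE : ∀ e ∈ l, e ∈ G.edgeSet)
    (p : Sym2 V → Prop) [DecidablePred p] :
    #{e : G.edgeSet | (e : Sym2 V) ∈ l ∧ p e} = l.countP p := by
  rw [List.countP_eq_length_filter, ← List.toFinset_card_of_nodup (hl.filter _),
    ← card_map (Function.Embedding.subtype _)]
  congr 1
  ext e
  simp only [mem_map, mem_filter, mem_univ, true_and, Function.Embedding.subtype_apply,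
    List.mem_toFinset, List.mem_filter, decide_eq_true_eq]
  constructor
  · rintro ⟨e, he, rfl⟩
    exact he
  · rintro he
    exact ⟨⟨e, hlE e he.1⟩, he, rfl⟩

theorem inDegreeOf_reverseAlong {o : G.edgeSet → G.Dart} (ho : ∀ e, (o e).edge = e)
    {l : List (Sym2 V)} (hl : l.Nodup) (hlE : ∀ e ∈ l, e ∈ G.edgeSet) (v : V) :
    (inDegreeOf (reverseAlong o l) v : ZMod 2) = inDegreeOf o v + l.countP (v ∈ ·) := by
  rw [inDegreeOf, inDegreeOf, ← card_filter_mem_list_eq_countP hl hlE (v ∈ ·)]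
  simp only [natCast_card_filter, ← sum_add_distrib]
  refine sum_congr rfl fun e _ => ?_
  by_cases hl : (e : Sym2 V) ∈ l
  · simp only [reverseAlong, hl, if_true, true_and]
    rw [← ho e]
    exact (o e).ite_symm_snd_eq v
  · simp [reverseAlong, hl]

theorem inDegreeOf_reverseAlong_edges {o : G.edgeSet → G.Dart} (ho : ∀ e, (o e).edge = e)
    {u w : V} {p : G.Walk u w} (hp : p.IsPath) (huw : u ≠ w) (v : V) :
    (inDegreeOf (reverseAlong o p.edges) v : ZMod 2) =
      inDegreeOf o v + if v = u ∨ v = w then 1 else 0 := by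
  rw [inDegreeOf_reverseAlong ho hp.isTrail.edges_nodup (fun _ he => p.edges_subset_edgeSet he)]
  have hcount := hp.isTrail.even_countP_edges_iff v
  congr 1
  split_ifs with h
  · rw [ZMod.natCast_eq_one_iff_odd, ← Nat.not_even_iff_odd, hcount]
    tauto
  · rw [ZMod.natCast_eq_zero_iff_even, hcount]
    tauto

variable [Fintype V]

theorem sum_inDegreeOf (o : G.edgeSet → G.Dart) :
    ∑ v, inDegreeOf o v = Fintype.card G.edgeSet :=
  (card_eq_sum_card_fiberwise fun _ _ => mem_univ _).symm

theorem exists_odd_inDegreeOf_ne (hE : Even (Fintype.card G.edgeSet)) {o : G.edgeSet → G.Dart}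
    {u : V} (hu : Odd (inDegreeOf o u)) : ∃ w ≠ u, Odd (inDegreeOf o w) := by
  by_contra! h
  have hsum : ((∑ v, inDegreeOf o v : ℕ) : ZMod 2) = inDegreeOf o u := by
    push_cast
    exact sum_eq_single u (fun v _ hv => (ZMod.natCast_eq_zero_iff_even).mpr
      (Nat.not_odd_iff_even.mp (h v hv))) (by simp)
  rw [sum_inDegreeOf, (ZMod.natCast_eq_zero_iff_even).mpr hE,
    (ZMod.natCast_eq_one_iff_odd).mpr hu] at hsum
  exact zero_ne_one hsum

theorem Connected.exists_card_odd_inDegreeOf_lt (hG : G.Connected)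
    (hE : Even (Fintype.card G.edgeSet)) {o : G.edgeSet → G.Dart} (ho : ∀ e, (o e).edge = e)
    {u : V} (hu : Odd (inDegreeOf o u)) :
    ∃ o' : G.edgeSet → G.Dart, (∀ e, (o' e).edge = e) ∧
      #{v | Odd (inDegreeOf o' v)} < #{v | Odd (inDegreeOf o v)} := by
  obtain ⟨w, hwu, hw⟩ := exists_odd_inDegreeOf_ne hE hu
  obtain ⟨p, hp⟩ := hG.exists_isPath u w
  have hodd : ∀ v, Odd (inDegreeOf (reverseAlong o p.edges) v) ↔
      Odd (inDegreeOf o v) ∧ ¬(v = u ∨ v = w) := by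
    intro v
    rw [← ZMod.natCast_eq_one_iff_odd, ← ZMod.natCast_eq_one_iff_odd,
      inDegreeOf_reverseAlong_edges ho hp hwu.symm]
    split_ifs with h
    · rcases h with rfl | rfl
      · rw [(ZMod.natCast_eq_one_iff_odd).mpr hu]
        exact iff_of_false (by decide) (by simp)
      · rw [(ZMod.natCast_eq_one_iff_odd).mpr hw]
        exact iff_of_false (by decide) (by simp)
    · simp [h]
  refine ⟨reverseAlong o p.edges, edge_reverseAlong ho _, card_lt_card ?_⟩
  have hsub : ({v | Odd (inDegreeOf (reverseAlong o p.edges) v)} : Finset V) ⊆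
      ({v | Odd (inDegreeOf o v)} : Finset V) :=
    fun v => by simpa only [mem_filter, mem_univ, true_and] using fun hv => ((hodd v).mp hv).1
  rw [ssubset_iff_of_subset hsub]
  exact ⟨u, by simpa using hu, by simp [hodd]⟩

theorem Connected.exists_orientation_even_inDegreeOf (hG : G.Connected)
    (hE : Even (Fintype.card G.edgeSet)) :
    ∃ o : G.edgeSet → G.Dart, (∀ e, (o e).edge = e) ∧ ∀ v, Even (inDegreeOf o v) := by
  choose o₀ ho₀ using exists_dart_edge_eq (G := G)
  obtain ⟨o, ho, hmin⟩ := (measure fun o : G.edgeSet → G.Dart =>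
    #{v | Odd (inDegreeOf o v)}).wf.has_min {o | ∀ e, (o e).edge = e} ⟨o₀, ho₀⟩
  refine ⟨o, ho, fun v => Nat.not_odd_iff_even.mp fun hv => ?_⟩
  obtain ⟨o', ho', hlt⟩ := hG.exists_card_odd_inDegreeOf_lt hE ho hv
  exact hmin o' ho' hlt

end Orientation

theorem Connected.exists_isPerfectMatching_lineGraph [Finite V] {G : SimpleGraph V}
    (hG : G.Connected) (hE : Even G.edgeSet.ncard) :
    ∃ M : G.lineGraph.Subgraph, M.IsPerfectMatching := by
  classical
  have := Fintype.ofFinite V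
  rw [← Nat.card_coe_set_eq, Nat.card_eq_fintype_card] at hE
  obtain ⟨o, ho, heven⟩ := hG.exists_orientation_even_inDegreeOf hE
  refine exists_isPerfectMatching_of_isClique_fibers (fun e => (o e).snd)
    (fun v e₁ he₁ e₂ he₂ hne => ?_) fun v => ?_
  · have hmem : ∀ e : G.edgeSet, (o e).snd ∈ (e : Sym2 V) := fun e =>
      ho e ▸ Sym2.mem_mk_right _ _
    rw [lineGraph_adj_iff_exists]
    exact ⟨hne, v, he₁ ▸ hmem e₁, he₂ ▸ hmem e₂⟩
  · simpa [inDegreeOf, Set.ncard_eq_toFinset_card'] using heven v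

def lineGraphDeleteEdgesIso (G : SimpleGraph V) (e : G.edgeSet) :
    (G.deleteEdges {(e : Sym2 V)}).lineGraph ≃g G.lineGraph.induce {e}ᶜ where
  toFun f :=
    have hf : (f : Sym2 V) ∈ G.edgeSet \ {(e : Sym2 V)} := edgeSet_deleteEdges _ ▸ f.2
    ⟨⟨f, hf.1⟩, fun h => hf.2 (congrArg Subtype.val h)⟩
  invFun f := ⟨f.1.1, by
    rw [edgeSet_deleteEdges]
    exact ⟨f.1.2, fun h => f.2 (Subtype.ext h)⟩⟩
  left_inv _ := rfl
  right_inv _ := rfl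
  map_rel_iff' := by simp [lineGraph_adj_iff_exists, Subtype.ext_iff]

end SimpleGraph

theorem stmt16_general {V : Type*} [Fintype V] (G : SimpleGraph V)
    (h2ec : ∀ e ∈ G.edgeSet, (G.deleteEdges {e}).Connected)
    (hodd : Odd G.edgeSet.ncard) :
    IsFactorCritical G.lineGraph := by
  intro e
  have hE : Even (G.deleteEdges {(e : Sym2 V)}).edgeSet.ncard := by
    rw [edgeSet_deleteEdges, Set.ncard_sdiff_singleton_of_mem e.2]
    exact Nat.Odd.sub_odd hodd odd_one
  obtain ⟨M, hM⟩ := (h2ec e e.2).exists_isPerfectMatching_lineGraph hE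
  exact (G.lineGraphDeleteEdgesIso e).exists_isPerfectMatching hM

theorem stmt16 {V : Type*} [Fintype V] (G : SimpleGraph V) (hc : G.Connected)
    (h2ec : ∀ e ∈ G.edgeSet, (G.deleteEdges {e}).Connected)
    (h3 : 3 ≤ G.edgeSet.ncard) (hodd : Odd G.edgeSet.ncard) :
    IsFactorCritical G.lineGraph :=
  stmt16_general G h2ec hodd
end
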